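/- arXiv:1601.00145 — 5 statements merged into one kernel-verified Lean document; each statement's English description precedes it below -/
import Mathlib

section
/- If all n centers of a packing of n ≥ 2 unit balls are lattice points of the face-centered cubic lattice with shortest nonzero vector of length 2, then the number of touching pairs is less than 6n − (3·(18π)^(1/3)/π)·n^(2/3). -/
/-!
Dividing by `√2`, the centres become a set `S` of `n` points of `ℤ³`, and touching pairs are
pairs differing by one of the twelve vectors of squared length `2`. For each such vector `u`,
the number of `x ∈ S` with `x + u ∈ S` is at most `n` minus the number of lines parallel to `u`
meeting `S`. The six directions split into two bases of `ℝ³`; for each basis the discrete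
Loomis–Whitney inequality bounds the product of the three line counts below by `n²`, hence
(AM–GM) their sum by `3 n^(2/3)`. So there are at most `6n - 6 n^(2/3)` touching pairs, and
`6 > 3 (18π)^(1/3) / π`.
-/

open scoped Classical

noncomputable section

/-- Twice the contact number: the number of ordered pairs of distinct centers in `P`
at distance exactly `2`. -/
def contactsOrdered {d : ℕ} (P : Finset (EuclideanSpace ℝ (Fin d))) : ℕ :=
  (P.offDiag.filter fun p => dist p.1 p.2 = 2).card

/-- The face-centered cubic lattice with shortest nonzero vector of length `2`:
points of `√2 · ℤ³` whose coordinate sum lies in `2√2 · ℤ`. -/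
def fccLattice : Set (EuclideanSpace ℝ (Fin 3)) :=
  {v | (∀ i, ∃ m : ℤ, v i = m * Real.sqrt 2) ∧
    ∃ m : ℤ, v 0 + v 1 + v 2 = m * (2 * Real.sqrt 2)}

open Finset

theorem card_filter_add_mem_add_card_image_le {α β γ : Type*} [Add α] [DecidableEq α]
    [DecidableEq β] [LinearOrder γ] (S : Finset α) (v : α) (g : α → β) (h : α → γ)
    (hg : ∀ x, g (x + v) = g x) (hh : ∀ x, h x < h (x + v)) :
    #{x ∈ S | x + v ∈ S} + #(S.image g) ≤ #S := by
  -- the `h`-last point of each fibre of `g` in `S` has its successor outside `S`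
  have hends : S.image g ⊆ {x ∈ S | x + v ∉ S}.image g := by
    simp only [subset_iff, mem_image, mem_filter]
    rintro _ ⟨x, hx, rfl⟩
    obtain ⟨y, hy, hymax⟩ := exists_max_image {y ∈ S | g y = g x} h ⟨x, by simp [hx]⟩
    rw [mem_filter] at hy
    refine ⟨y, ⟨hy.1, fun hyv => ?_⟩, hy.2⟩
    exact (hh y).not_ge (hymax _ (by simp [hyv, hg, hy.2]))
  calc #{x ∈ S | x + v ∈ S} + #(S.image g)
      ≤ #{x ∈ S | x + v ∈ S} + #{x ∈ S | x + v ∉ S} :=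
        Nat.add_le_add_left ((card_le_card hends).trans card_image_le) _
    _ = #S := card_filter_add_card_filter_not _

theorem sum_card_image_fiber_eq {α β₁ β₂ : Type*} [DecidableEq β₁] [DecidableEq β₂]
    (S : Finset α) (f₁ : α → β₁) (f₂ : α → β₂) :
    ∑ a ∈ S.image f₁, #({x ∈ S | f₁ x = a}.image f₂) = #(S.image fun x => (f₁ x, f₂ x)) := by
  rw [card_eq_sum_card_fiberwise (f := Prod.fst) (t := S.image f₁) fun p hp => by
    obtain ⟨x, hx, rfl⟩ := mem_image.1 hp
    exact mem_image_of_mem f₁ hx]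
  refine sum_congr rfl fun a _ => ?_
  rw [← card_image_of_injective _ (Prod.mk_right_injective a)]
  congr 1
  ext ⟨b, c⟩
  simp only [mem_image, mem_filter, Prod.mk.injEq]
  constructor
  · rintro ⟨_, ⟨x, ⟨hx, rfl⟩, rfl⟩, rfl, rfl⟩
    exact ⟨⟨x, hx, rfl, rfl⟩, rfl⟩
  · rintro ⟨⟨x, hx, rfl, rfl⟩, rfl⟩
    exact ⟨_, ⟨x, ⟨hx, rfl⟩, rfl⟩, rfl, rfl⟩

theorem card_sq_le_card_image_mul {α β₁ β₂ β₃ : Type*} [DecidableEq β₁] [DecidableEq β₂]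
    [DecidableEq β₃] (S : Finset α) (f₁ : α → β₁) (f₂ : α → β₂) (f₃ : α → β₃)
    (hinj : Set.InjOn (fun x => (f₁ x, f₂ x, f₃ x)) S) :
    #S ^ 2 ≤ #(S.image fun x => (f₂ x, f₃ x)) * #(S.image fun x => (f₁ x, f₃ x)) *
      #(S.image fun x => (f₁ x, f₂ x)) := by
  -- slice `S` along `f₁` and apply Cauchy–Schwarz to the sum over the slices
  set slice : β₁ → Finset α := fun a => {x ∈ S | f₁ x = a}
  have hslice_injOn : ∀ a, Set.InjOn (fun x => (f₂ x, f₃ x)) (slice a) := by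
    intro a x hx y hy hxy
    simp only [slice, coe_filter, Set.mem_ofPred_eq] at hx hy
    simp only [Prod.mk.injEq] at hxy
    exact hinj hx.1 hy.1 (by simp [hx.2, hy.2, hxy])
  have hslice_le_proj : ∀ a, #(slice a) ≤ #(S.image fun x => (f₂ x, f₃ x)) := fun a =>
    card_le_card_of_injOn _ (fun x hx => mem_image_of_mem _ (mem_filter.1 hx).1)
      (hslice_injOn a)
  have hslice_le_mul : ∀ a, #(slice a) ≤ #((slice a).image f₂) * #((slice a).image f₃) :=
    fun a => (card_le_card_of_injOn (fun x => (f₂ x, f₃ x))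
      (fun x hx => mem_product.2 ⟨mem_image_of_mem f₂ hx, mem_image_of_mem f₃ hx⟩)
      (hslice_injOn a)).trans_eq (card_product _ _)
  have hS : #S = ∑ a ∈ S.image f₁, #(slice a) :=
    card_eq_sum_card_fiberwise fun x hx => mem_image_of_mem _ hx
  calc #S ^ 2 = (∑ a ∈ S.image f₁, #(slice a)) ^ 2 := by rw [hS]
    _ ≤ (∑ a ∈ S.image f₁, #(S.image fun x => (f₂ x, f₃ x)) * #((slice a).image f₂)) *
        ∑ a ∈ S.image f₁, #((slice a).image f₃) := by
      refine sum_sq_le_sum_mul_sum_of_sq_le_mul _ (fun _ _ => Nat.zero_le _)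
        (fun _ _ => Nat.zero_le _) fun a _ => ?_
      rw [sq, mul_assoc]
      exact Nat.mul_le_mul (hslice_le_proj a) (hslice_le_mul a)
    _ = _ := by
      rw [← mul_sum, sum_card_image_fiber_eq, sum_card_image_fiber_eq, mul_right_comm]

theorem three_mul_le_add_of_pow_three_le_mul {a x y z : ℝ} (hx : 0 ≤ x) (hy : 0 ≤ y)
    (hz : 0 ≤ z) (h : a ^ 3 ≤ x * y * z) : 3 * a ≤ x + y + z := by
  have hcube : 27 * (x * y * z) ≤ (x + y + z) ^ 3 := by
    nlinarith [mul_nonneg (add_nonneg (add_nonneg hx hy) hz)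
      (add_nonneg (add_nonneg (sq_nonneg (x - y)) (sq_nonneg (y - z))) (sq_nonneg (x - z))),
      mul_nonneg hz (sq_nonneg (x - y)), mul_nonneg hx (sq_nonneg (y - z)),
      mul_nonneg hy (sq_nonneg (x - z))]
  by_contra! hlt
  have := pow_lt_pow_left₀ hlt (by positivity) three_ne_zero
  nlinarith

theorem sum_card_filter_add_mem_add_le {G β₁ β₂ β₃ : Type*} [Add G] [DecidableEq G]
    [LinearOrder β₁] [LinearOrder β₂] [LinearOrder β₃] (S : Finset G)
    (f₁ : G → β₁) (f₂ : G → β₂) (f₃ : G → β₃) (u₁ u₂ u₃ : G)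
    (hinj : Set.InjOn (fun x => (f₁ x, f₂ x, f₃ x)) S)
    (h₁ : ∀ x, f₁ x < f₁ (x + u₁) ∧ f₂ (x + u₁) = f₂ x ∧ f₃ (x + u₁) = f₃ x)
    (h₂ : ∀ x, f₁ (x + u₂) = f₁ x ∧ f₂ x < f₂ (x + u₂) ∧ f₃ (x + u₂) = f₃ x)
    (h₃ : ∀ x, f₁ (x + u₃) = f₁ x ∧ f₂ (x + u₃) = f₂ x ∧ f₃ x < f₃ (x + u₃)) :
    (#{x ∈ S | x + u₁ ∈ S} + #{x ∈ S | x + u₂ ∈ S} + #{x ∈ S | x + u₃ ∈ S} : ℝ) +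
      3 * (#S : ℝ) ^ ((2 : ℝ) / 3) ≤ 3 * #S := by
  have l₁ := card_filter_add_mem_add_card_image_le S u₁ (fun x => (f₂ x, f₃ x)) f₁
    (fun x => by simp [(h₁ x).2]) fun x => (h₁ x).1
  have l₂ := card_filter_add_mem_add_card_image_le S u₂ (fun x => (f₁ x, f₃ x)) f₂
    (fun x => by simp [(h₂ x).1, (h₂ x).2.2]) fun x => (h₂ x).2.1
  have l₃ := card_filter_add_mem_add_card_image_le S u₃ (fun x => (f₁ x, f₂ x)) f₃
    (fun x => by simp [(h₃ x).1, (h₃ x).2.1]) fun x => (h₃ x).2.2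
  have hlw : ((#S : ℝ) ^ ((2 : ℝ) / 3)) ^ 3 ≤ #(S.image fun x => (f₂ x, f₃ x)) *
      #(S.image fun x => (f₁ x, f₃ x)) * #(S.image fun x => (f₁ x, f₂ x)) := by
    rw [← Real.rpow_natCast, ← Real.rpow_mul (by positivity)]
    norm_num
    exact_mod_cast card_sq_le_card_image_mul S f₁ f₂ f₃ hinj
  have := three_mul_le_add_of_pow_three_le_mul (by positivity) (by positivity) (by positivity) hlw
  rify at l₁ l₂ l₃
  linarith

def fccDirections : Finset (ℤ × ℤ × ℤ) :=
  {(1, 1, 0), (1, -1, 0), (1, 0, 1), (1, 0, -1), (0, 1, 1), (0, 1, -1)}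

theorem sum_fccDirections {M : Type*} [AddCommMonoid M] (F : ℤ × ℤ × ℤ → M) :
    ∑ u ∈ fccDirections, F u = F (1, 1, 0) + F (1, -1, 0) + F (1, 0, 1) +
      (F (1, 0, -1) + F (0, 1, 1) + F (0, 1, -1)) := by
  simp [fccDirections, sum_insert, add_assoc]

def sqNorm (v : ℤ × ℤ × ℤ) : ℤ :=
  v.1 ^ 2 + v.2.1 ^ 2 + v.2.2 ^ 2

theorem mem_fccDirections_or_neg_mem {v : ℤ × ℤ × ℤ} (h : sqNorm v = 2) :
    v ∈ fccDirections ∨ -v ∈ fccDirections := by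
  obtain ⟨a, b, c⟩ := v
  simp only [sqNorm] at h
  have ha : |a| ≤ 1 := by nlinarith [sq_abs a, abs_nonneg a, sq_nonneg b, sq_nonneg c]
  have hb : |b| ≤ 1 := by nlinarith [sq_abs b, abs_nonneg b, sq_nonneg a, sq_nonneg c]
  have hc : |c| ≤ 1 := by nlinarith [sq_abs c, abs_nonneg c, sq_nonneg a, sq_nonneg b]
  rw [abs_le] at ha hb hc
  obtain ⟨ha₀, ha₁⟩ := ha
  obtain ⟨hb₀, hb₁⟩ := hb
  obtain ⟨hc₀, hc₁⟩ := hc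
  interval_cases a <;> interval_cases b <;> interval_cases c <;> revert h <;> decide

def scaledIntPoint (z : ℤ × ℤ × ℤ) : EuclideanSpace ℝ (Fin 3) :=
  !₂[√2 * z.1, √2 * z.2.1, √2 * z.2.2]

theorem scaledIntPoint_injective : Function.Injective scaledIntPoint := by
  intro x y hxy
  have hs : √2 ≠ 0 := by positivity
  have h₀ := congrArg (· 0) hxy
  have h₁ := congrArg (· 1) hxy
  have h₂ := congrArg (· 2) hxy
  simp [scaledIntPoint, hs] at h₀ h₁ h₂
  exact Prod.ext h₀ (Prod.ext h₁ h₂)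

theorem fccLattice_subset_range_scaledIntPoint : fccLattice ⊆ Set.range scaledIntPoint := by
  rintro v ⟨hv, -⟩
  choose m hm using hv
  refine ⟨(m 0, m 1, m 2), ?_⟩
  ext i
  fin_cases i <;> simp [scaledIntPoint, hm, mul_comm]

theorem dist_scaledIntPoint_sq (x y : ℤ × ℤ × ℤ) :
    dist (scaledIntPoint x) (scaledIntPoint y) ^ 2 = 2 * sqNorm (x - y) := by
  rw [EuclideanSpace.dist_eq, Real.sq_sqrt (by positivity), Fin.sum_univ_three]
  simp only [scaledIntPoint, sqNorm, Real.dist_eq, sq_abs, Prod.fst_sub, Prod.snd_sub]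
  push_cast
  simp only [← mul_sub, mul_pow, Real.sq_sqrt zero_le_two]
  ring

theorem sub_mem_fccDirections_or_of_dist_eq_two {x y : ℤ × ℤ × ℤ}
    (h : dist (scaledIntPoint x) (scaledIntPoint y) = 2) :
    y - x ∈ fccDirections ∨ x - y ∈ fccDirections := by
  have hsq := dist_scaledIntPoint_sq y x
  rw [dist_comm, h] at hsq
  rw [← neg_sub y x]
  exact mem_fccDirections_or_neg_mem (by exact_mod_cast (by linarith : (sqNorm (y - x) : ℝ) = 2))

theorem contactsOrdered_image_scaledIntPoint_le (S : Finset (ℤ × ℤ × ℤ)) :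
    contactsOrdered (S.image scaledIntPoint) ≤
      2 * ∑ u ∈ fccDirections, #{x ∈ S | x + u ∈ S} := by
  set pairs : ℤ × ℤ × ℤ → Finset (EuclideanSpace ℝ (Fin 3) × EuclideanSpace ℝ (Fin 3)) :=
    fun u => {x ∈ S | x + u ∈ S}.image fun x => (scaledIntPoint x, scaledIntPoint (x + u))
  have hcover : {p ∈ (S.image scaledIntPoint).offDiag | dist p.1 p.2 = 2} ⊆
      fccDirections.biUnion fun u => pairs u ∪ (pairs u).image Prod.swap := by
    rintro ⟨p, q⟩ hp
    simp only [mem_filter, mem_offDiag, mem_image] at hp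
    obtain ⟨⟨⟨x, hx, rfl⟩, ⟨y, hy, rfl⟩, -⟩, hdist⟩ := hp
    simp only [mem_biUnion, mem_union, mem_image, mem_filter, pairs]
    rcases sub_mem_fccDirections_or_of_dist_eq_two hdist with hu | hu
    · exact ⟨y - x, hu, Or.inl ⟨x, ⟨hx, by simpa using hy⟩, by simp⟩⟩
    · exact ⟨x - y, hu, Or.inr ⟨_, ⟨y, ⟨hy, by simpa using hx⟩, rfl⟩, by simp⟩⟩
  calc contactsOrdered (S.image scaledIntPoint)
      ≤ #(fccDirections.biUnion fun u => pairs u ∪ (pairs u).image Prod.swap) :=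
        card_le_card hcover
    _ ≤ ∑ u ∈ fccDirections, #(pairs u ∪ (pairs u).image Prod.swap) := card_biUnion_le
    _ ≤ ∑ u ∈ fccDirections, 2 * #{x ∈ S | x + u ∈ S} := by
      gcongr with u
      calc #(pairs u ∪ (pairs u).image Prod.swap) ≤ #(pairs u) + #(pairs u) :=
            (card_union_le _ _).trans (Nat.add_le_add_left card_image_le _)
        _ ≤ 2 * #{x ∈ S | x + u ∈ S} := by
          rw [← two_mul]; exact Nat.mul_le_mul_left _ card_image_le
    _ = 2 * ∑ u ∈ fccDirections, #{x ∈ S | x + u ∈ S} := by rw [mul_sum]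

theorem cbrt_eighteen_mul_pi_lt : (18 * Real.pi) ^ ((1 : ℝ) / 3) < 2 * Real.pi := by
  have hπ := Real.pi_gt_three
  calc (18 * Real.pi) ^ ((1 : ℝ) / 3) < ((2 * Real.pi) ^ 3) ^ ((1 : ℝ) / 3) := by
        gcongr; nlinarith [mul_pos Real.pi_pos Real.pi_pos]
    _ = 2 * Real.pi := by
        rw [← Real.rpow_natCast, ← Real.rpow_mul (by positivity)]; norm_num

theorem contact_upper_bound_fcc_general (n : ℕ) (hn : 2 ≤ n)
    (P : Finset (EuclideanSpace ℝ (Fin 3))) (hsub : ↑P ⊆ fccLattice)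
    (hcard : P.card = n) :
    (contactsOrdered P : ℝ) <
      2 * (6 * n - 3 * (18 * Real.pi) ^ ((1 : ℝ) / 3) / Real.pi * (n : ℝ) ^ ((2 : ℝ) / 3)) := by
  obtain ⟨S, -, rfl⟩ := subset_set_image_iff.1
    (hsub.trans (Set.image_univ ▸ fccLattice_subset_range_scaledIntPoint))
  rw [card_image_of_injective _ scaledIntPoint_injective] at hcard
  subst hcard
  have hcontacts := contactsOrdered_image_scaledIntPoint_le S
  -- coordinates dual, up to positive factors, to the bases `(1,1,0), (1,-1,0), (1,0,1)` and
  -- `(1,0,-1), (0,1,1), (0,1,-1)`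
  have h₁ := sum_card_filter_add_mem_add_le S (fun x => x.1 + x.2.1 - x.2.2)
    (fun x => x.1 - x.2.1 - x.2.2) (fun x => x.2.2) (1, 1, 0) (1, -1, 0) (1, 0, 1)
    (fun x _ y _ h => by simp only [Prod.mk.injEq] at h; ext <;> omega)
    (fun x => by simp only [Prod.fst_add, Prod.snd_add]; omega)
    (fun x => by simp only [Prod.fst_add, Prod.snd_add]; omega)
    (fun x => by simp only [Prod.fst_add, Prod.snd_add]; omega)
  have h₂ := sum_card_filter_add_mem_add_le S (fun x => x.1)
    (fun x => x.1 + x.2.1 + x.2.2) (fun x => -x.1 + x.2.1 - x.2.2) (1, 0, -1) (0, 1, 1) (0, 1, -1)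
    (fun x _ y _ h => by simp only [Prod.mk.injEq] at h; ext <;> omega)
    (fun x => by simp only [Prod.fst_add, Prod.snd_add]; omega)
    (fun x => by simp only [Prod.fst_add, Prod.snd_add]; omega)
    (fun x => by simp only [Prod.fst_add, Prod.snd_add]; omega)
  have ht : 0 < (#S : ℝ) ^ ((2 : ℝ) / 3) := by
    have : 0 < #S := by omega
    positivity
  have hcoef : 3 * (18 * Real.pi) ^ ((1 : ℝ) / 3) / Real.pi < 6 := by
    rw [div_lt_iff₀ Real.pi_pos]; linarith [cbrt_eighteen_mul_pi_lt]
  rw [sum_fccDirections] at hcontacts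
  rify at hcontacts
  have := mul_lt_mul_of_pos_right hcoef ht
  linarith

/-- Upper bound for contact numbers of packings of `n ≥ 2` unit balls all of whose
centers belong to the fcc lattice: fewer than `6n - (3·(18π)^(1/3)/π)·n^(2/3)`
touching pairs. -/
theorem contact_upper_bound_fcc (n : ℕ) (hn : 2 ≤ n)
    (P : Finset (EuclideanSpace ℝ (Fin 3))) (hsub : ↑P ⊆ fccLattice)
    (hcard : P.card = n)
    (hpack : ∀ x ∈ P, ∀ y ∈ P, x ≠ y → 2 ≤ dist x y) :
    (contactsOrdered P : ℝ) <
      2 * (6 * n - 3 * (18 * Real.pi) ^ ((1 : ℝ) / 3) / Real.pi * (n : ℝ) ^ ((2 : ℝ) / 3)) :=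
  contact_upper_bound_fcc_general n hn P hsub hcard
end
end

section
/- For every integer k ≥ 2, setting n = k(2k²+1)/3, there is an n-point subset of the face-centered cubic lattice (minimal distance 2) whose number of pairs at distance exactly 2 equals 2k(2k²−3k+1), and moreover 2k(2k²−3k+1) > 6n − 486^(1/3)·n^(2/3). -/
open scoped Classical

noncomputable section

open Finset

/-!
Write `r = k - 1`. Scaled by `√2`, the fcc lattice is `{w ∈ ℤ³ : w₀ + w₁ + w₂ even}`, and the
cluster is the octahedron `{w ∈ ℤ³ : |w|₁ ≤ r, |w|₁ ≡ r (mod 2)}` (translated by `(r, 0, 0)` to lie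
in the lattice). Its layers `w₂ = z` are square grids of side `r + 1 - |z|` in the coordinates
`w₀ ± w₁`, which gives `n = k(2k² + 1)/3` points. Touching pairs are the pairs differing by one of
the twelve vectors `±eᵢ ± eⱼ`. Signed permutations of the coordinates preserve the octahedron and
act transitively on these vectors, so each one accounts for as many pairs as `(1, 1, 0)`. Shifting
by `(1, 1, 0)` removes one row from each layer, leaving `k(k - 1)(2k - 1)/3` pairs. The inequality
reduces to `(6k²)³ < 486 n²`.
-/

lemma two_le_sum_sq_of_even_sum {ι : Type*} [Fintype ι] {d : ι → ℤ} (hd : d ≠ 0)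
    (he : Even (∑ i, d i)) : 2 ≤ ∑ i, d i ^ 2 := by
  obtain ⟨j, hj⟩ := Function.ne_iff.mp hd
  have hpos : 1 ≤ ∑ i, d i ^ 2 :=
    calc 1 ≤ d j ^ 2 := by nlinarith [sq_nonneg (d j), Int.one_le_abs hj, sq_abs (d j)]
      _ ≤ ∑ i, d i ^ 2 := single_le_sum (fun i _ => sq_nonneg (d i)) (mem_univ j)
  have heven : Even (∑ i, d i ^ 2) := by
    have : Even (∑ i, (d i ^ 2 - d i)) :=
      Finset.even_sum _ fun i _ => by simpa [sq, ← mul_sub_one] using Int.even_mul_pred_self (d i)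
    rw [sum_sub_distrib] at this
    simpa using this.add he
  obtain ⟨m, hm⟩ := heven
  omega

lemma lt_rpow_mul_rpow_of_pow_lt {x a b : ℝ} (hx : 0 ≤ x) (ha : 0 ≤ a) (hb : 0 ≤ b)
    (h : x ^ 3 < a * b ^ 2) : x < a ^ (1 / 3 : ℝ) * b ^ (2 / 3 : ℝ) := by
  have hcube (y : ℝ) (hy : 0 ≤ y) : (y ^ 3) ^ (1 / 3 : ℝ) = y := by
    rw [← Real.rpow_natCast, ← Real.rpow_mul hy]; norm_num
  rw [show (2 / 3 : ℝ) = 2 * (1 / 3) by norm_num, Real.rpow_mul hb, Real.rpow_two,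
    ← Real.mul_rpow ha (by positivity), ← hcube x hx]
  exact Real.rpow_lt_rpow (by positivity) h (by norm_num)

lemma sum_Icc_natAbs {M : Type*} [AddCommMonoid M] (g : ℕ → M) (r : ℕ) :
    ∑ z ∈ Icc (-(r : ℤ)) r, g (r - z.natAbs) = g r + 2 • ∑ j ∈ range r, g j := by
  induction r generalizing g with
  | zero => simp
  | succ r ih =>
    have hIcc : Icc (-((r + 1 : ℕ) : ℤ)) (r + 1 : ℕ) =
        insert (-((r : ℤ) + 1)) (insert ((r : ℤ) + 1) (Icc (-(r : ℤ)) r)) := by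
      ext z; simp only [mem_Icc, mem_insert]; omega
    have hinner : ∑ z ∈ Icc (-(r : ℤ)) r, g (r + 1 - z.natAbs) =
        ∑ z ∈ Icc (-(r : ℤ)) r, g (r - z.natAbs + 1) :=
      sum_congr rfl fun z hz => by rw [mem_Icc] at hz; congr 1; omega
    rw [hIcc, sum_insert (by simp only [mem_insert, mem_Icc]; omega), sum_insert (by simp),
      hinner, ih fun j => g (j + 1), sum_range_succ' g, Int.natAbs_neg,
      show ((r : ℤ) + 1).natAbs = r + 1 by omega, Nat.sub_self, smul_add, two_nsmul (g 0)]
    abel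

section Differences

variable {G : Type*} [AddCommGroup G] [DecidableEq G]

lemma card_offDiag_filter_sub_mem (S D : Finset G) (hD : (0 : G) ∉ D) :
    #(S.offDiag.filter fun p => p.1 - p.2 ∈ D) = ∑ δ ∈ D, #(S.filter fun w => w + δ ∈ S) := by
  rw [card_eq_sum_card_fiberwise (f := fun p : G × G => p.1 - p.2) (t := D)
    (s := S.offDiag.filter fun p => p.1 - p.2 ∈ D) fun p hp => (mem_filter.mp hp).2]
  refine sum_congr rfl fun δ hδ => card_nbij' Prod.snd (fun w => (w + δ, w)) ?_ ?_ ?_ ?_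
  · intro p hp
    simp only [coe_filter, mem_filter, mem_offDiag, Set.mem_ofPred_eq] at hp ⊢
    obtain ⟨⟨⟨h1, h2, -⟩, -⟩, rfl⟩ := hp
    simpa using And.intro h2 h1
  · intro w hw
    simp only [coe_filter, mem_filter, mem_offDiag, Set.mem_ofPred_eq] at hw ⊢
    refine ⟨⟨⟨hw.2, hw.1, ?_⟩, by simpa using hδ⟩, by simp⟩
    intro h
    exact hD (add_eq_left.mp h ▸ hδ)
  · intro p hp
    simp only [coe_filter, mem_filter, mem_offDiag, Set.mem_ofPred_eq] at hp
    obtain ⟨-, rfl⟩ := hp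
    simp
  · intro w _
    rfl

lemma card_filter_add_map_mem (S : Finset G) (e : G ≃+ G) (hS : ∀ w, e w ∈ S ↔ w ∈ S) (δ : G) :
    #(S.filter fun w => w + e δ ∈ S) = #(S.filter fun w => w + δ ∈ S) := by
  refine card_nbij' e.symm e ?_ ?_ (fun w _ => e.apply_symm_apply w)
    (fun w _ => e.symm_apply_apply w)
  · intro w hw
    simp only [coe_filter, Set.mem_ofPred_eq] at hw ⊢
    rw [← hS (e.symm w), ← hS (e.symm w + δ), map_add, e.apply_symm_apply]
    exact hw
  · intro w hw
    simp only [coe_filter, Set.mem_ofPred_eq] at hw ⊢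
    rw [← map_add, hS, hS]
    exact hw

end Differences

lemma contactsOrdered_image {α : Type*} {d : ℕ} (S : Finset α) {f : α → EuclideanSpace ℝ (Fin d)}
    (hf : Function.Injective f) :
    contactsOrdered (S.image f) = #(S.offDiag.filter fun p => dist (f p.1) (f p.2) = 2) := by
  refine (card_bij (fun p _ => Prod.map f f p) ?_ (fun p _ q _ h => (hf.prodMap hf) h) ?_).symm
  · rintro ⟨v, w⟩ hp
    simp only [mem_filter, mem_offDiag] at hp ⊢
    exact ⟨⟨mem_image_of_mem f hp.1.1, mem_image_of_mem f hp.1.2.1, hf.ne hp.1.2.2⟩, hp.2⟩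
  · rintro ⟨x, y⟩ hxy
    simp only [mem_filter, mem_offDiag, mem_image] at hxy
    obtain ⟨⟨⟨v, hv, rfl⟩, ⟨w, hw, rfl⟩, hne⟩, hd⟩ := hxy
    exact ⟨(v, w), mem_filter.mpr ⟨mem_offDiag.mpr ⟨hv, hw, fun h => hne (congrArg f h)⟩, hd⟩, rfl⟩

def scaleSqrtTwo (w : Fin 3 → ℤ) : EuclideanSpace ℝ (Fin 3) :=
  WithLp.toLp 2 fun i => Real.sqrt 2 * w i

lemma scaleSqrtTwo_apply (w : Fin 3 → ℤ) (i : Fin 3) : scaleSqrtTwo w i = Real.sqrt 2 * w i := rfl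

lemma scaleSqrtTwo_injective : Function.Injective scaleSqrtTwo := by
  intro v w h
  funext i
  have := congrArg (· i) h
  simpa [scaleSqrtTwo_apply] using this

lemma scaleSqrtTwo_add_injective (h : Fin 3 → ℤ) :
    Function.Injective fun w => scaleSqrtTwo (w + h) :=
  fun _ _ hvw => add_right_cancel (scaleSqrtTwo_injective hvw)

lemma dist_scaleSqrtTwo_sq (v w : Fin 3 → ℤ) :
    dist (scaleSqrtTwo v) (scaleSqrtTwo w) ^ 2 = 2 * ((∑ i, (v i - w i) ^ 2 : ℤ) : ℝ) := by
  rw [EuclideanSpace.dist_eq, Real.sq_sqrt (by positivity), Int.cast_sum, mul_sum]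
  refine sum_congr rfl fun i _ => ?_
  rw [Real.dist_eq, sq_abs, scaleSqrtTwo_apply, scaleSqrtTwo_apply, ← mul_sub, mul_pow,
    Real.sq_sqrt zero_le_two]
  push_cast; ring

lemma dist_scaleSqrtTwo_eq_two_iff (v w : Fin 3 → ℤ) :
    dist (scaleSqrtTwo v) (scaleSqrtTwo w) = 2 ↔ ∑ i, (v i - w i) ^ 2 = 2 := by
  rw [← sq_eq_sq₀ dist_nonneg zero_le_two, dist_scaleSqrtTwo_sq]
  constructor <;> intro h
  · exact_mod_cast (by linarith : ((∑ i, (v i - w i) ^ 2 : ℤ) : ℝ) = 2)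
  · rw [h]; norm_num

lemma mem_fccLattice_iff {x : EuclideanSpace ℝ (Fin 3)} :
    x ∈ fccLattice ↔ ∃ w, Even (∑ i, w i) ∧ scaleSqrtTwo w = x := by
  have hs : Real.sqrt 2 ≠ 0 := by positivity
  constructor
  · rintro ⟨hcoord, m, hm⟩
    choose w hw using hcoord
    refine ⟨w, ⟨m, ?_⟩, ?_⟩
    · rw [hw 0, hw 1, hw 2] at hm
      have : ((w 0 + w 1 + w 2 : ℤ) : ℝ) = (m + m : ℤ) := by
        push_cast; apply mul_right_cancel₀ hs; linarith
      rw [Fin.sum_univ_three]; exact_mod_cast this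
    · ext i; rw [scaleSqrtTwo_apply, hw i, mul_comm]
  · rintro ⟨w, ⟨m, hm⟩, rfl⟩
    refine ⟨fun i => ⟨w i, mul_comm _ _⟩, m, ?_⟩
    simp only [scaleSqrtTwo_apply, Fin.sum_univ_three] at hm ⊢
    have : ((w 0 + w 1 + w 2 : ℤ) : ℝ) = m + m := by exact_mod_cast hm
    push_cast at this
    linear_combination Real.sqrt 2 * this

lemma two_le_dist_of_mem_fccLattice {x y : EuclideanSpace ℝ (Fin 3)} (hx : x ∈ fccLattice)
    (hy : y ∈ fccLattice) (hxy : x ≠ y) : 2 ≤ dist x y := by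
  obtain ⟨v, hv, rfl⟩ := mem_fccLattice_iff.mp hx
  obtain ⟨w, hw, rfl⟩ := mem_fccLattice_iff.mp hy
  have hne : v - w ≠ 0 := sub_ne_zero.mpr fun h => hxy (h ▸ rfl)
  have heven : Even (∑ i, (v - w) i) := by simpa [sum_sub_distrib] using hv.sub hw
  have h2 := two_le_sum_sq_of_even_sum hne heven
  have : (2 : ℝ) ^ 2 ≤ dist (scaleSqrtTwo v) (scaleSqrtTwo w) ^ 2 := by
    rw [dist_scaleSqrtTwo_sq]
    have : (2 : ℝ) ≤ ((∑ i, (v - w) i ^ 2 : ℤ) : ℝ) := by exact_mod_cast h2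
    simp only [Pi.sub_apply] at this
    linarith
  exact le_of_sq_le_sq (by simpa using this) dist_nonneg

def d3Roots : Finset (Fin 3 → ℤ) :=
  (Fintype.piFinset fun _ => Icc (-1 : ℤ) 1).filter fun δ => ∑ i, δ i ^ 2 = 2

lemma mem_d3Roots {δ : Fin 3 → ℤ} : δ ∈ d3Roots ↔ ∑ i, δ i ^ 2 = 2 := by
  rw [d3Roots, mem_filter, and_iff_right_iff_imp, Fintype.mem_piFinset]
  intro h i
  have : δ i ^ 2 ≤ 2 := h ▸ single_le_sum (fun j _ => sq_nonneg (δ j)) (mem_univ i)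
  rw [mem_Icc]
  constructor <;> nlinarith

lemma card_d3Roots : #d3Roots = 12 := by decide

lemma exists_perm_natAbs_eq_of_mem_d3Roots :
    ∀ δ ∈ d3Roots, ∃ σ ∈ ({1, Equiv.swap 1 2, Equiv.swap 0 2} : Finset (Equiv.Perm (Fin 3))),
      (fun i => ((δ i).natAbs : ℤ)) = ![1, 1, 0] ∘ σ := by
  decide

-- The cluster of the statement for `k = r + 1`, before scaling and translation.
def octahedron (r : ℕ) : Finset (Fin 3 → ℤ) :=
  (Fintype.piFinset fun _ => Icc (-(r : ℤ)) r).filter fun w =>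
    ∑ i, (w i).natAbs ≤ r ∧ ∑ i, (w i).natAbs ≡ r [MOD 2]

lemma mem_octahedron {r : ℕ} {w : Fin 3 → ℤ} :
    w ∈ octahedron r ↔ ∑ i, (w i).natAbs ≤ r ∧ ∑ i, (w i).natAbs ≡ r [MOD 2] := by
  rw [octahedron, mem_filter, and_iff_right_iff_imp, Fintype.mem_piFinset]
  rintro ⟨h, -⟩ i
  have := single_le_sum (fun j _ => Nat.zero_le (w j).natAbs) (mem_univ i)
  rw [mem_Icc]
  omega

lemma map_mem_octahedron_iff {r : ℕ} (e : (Fin 3 → ℤ) ≃+ (Fin 3 → ℤ))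
    (he : ∀ w, ∑ i, (e w i).natAbs = ∑ i, (w i).natAbs) (w : Fin 3 → ℤ) :
    e w ∈ octahedron r ↔ w ∈ octahedron r := by
  rw [mem_octahedron, mem_octahedron, he]

lemma card_octahedron_filter_add_mem_of_mem_d3Roots (r : ℕ) {δ : Fin 3 → ℤ} (hδ : δ ∈ d3Roots) :
    #((octahedron r).filter fun w => w + δ ∈ octahedron r) =
      #((octahedron r).filter fun w => w + ![1, 1, 0] ∈ octahedron r) := by
  -- `δ` is the image of `(1, 1, 0)` under a permutation followed by sign changes.
  obtain ⟨σ, -, hσ⟩ := exists_perm_natAbs_eq_of_mem_d3Roots δ hδ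
  let flip : (Fin 3 → ℤ) ≃+ (Fin 3 → ℤ) :=
    AddEquiv.piCongrRight fun i => if δ i < 0 then AddEquiv.neg ℤ else AddEquiv.refl ℤ
  let perm : (Fin 3 → ℤ) ≃+ (Fin 3 → ℤ) := (LinearEquiv.funCongrLeft ℤ ℤ σ).toAddEquiv
  have hflip : flip (fun i => ((δ i).natAbs : ℤ)) = δ := by
    funext i
    simp only [flip, AddEquiv.piCongrRight_apply]
    split_ifs <;> simp only [AddEquiv.neg_apply, AddEquiv.refl_apply] <;> omega
  have hperm : perm ![1, 1, 0] = fun i => ((δ i).natAbs : ℤ) := by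
    rw [hσ]; rfl
  rw [← hflip, card_filter_add_map_mem _ flip (map_mem_octahedron_iff flip ?_), ← hperm,
    card_filter_add_map_mem _ perm (map_mem_octahedron_iff perm ?_)]
  · intro w
    exact Equiv.sum_comp σ fun i => (w i).natAbs
  · intro w
    refine sum_congr rfl fun i _ => ?_
    simp only [flip, AddEquiv.piCongrRight_apply]
    split_ifs <;> simp only [AddEquiv.neg_apply, AddEquiv.refl_apply, Int.natAbs_neg]

lemma card_octahedron_filter_add_smul_mem (r c : ℕ) :
    #((octahedron r).filter fun w => w + c • ![1, 1, 0] ∈ octahedron r) =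
      ∑ z ∈ Icc (-(r : ℤ)) r, (r - z.natAbs + 1 - c) * (r - z.natAbs + 1) := by
  have hlayer (z : ℤ) : (r - z.natAbs + 1 - c) * (r - z.natAbs + 1) =
      #(range (r - z.natAbs + 1 - c) ×ˢ range (r - z.natAbs + 1)) := by simp
  rw [sum_congr rfl fun z _ => hlayer z, ← card_sigma]
  -- In the coordinates `(w 0 ± w 1 + r - |w 2|) / 2` the layer `w 2 = z` is a square grid.
  refine card_nbij'
    (fun w => ⟨w 2, ((w 0 + w 1 + (r - (w 2).natAbs)) / 2).toNat,
      ((w 0 - w 1 + (r - (w 2).natAbs)) / 2).toNat⟩)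
    (fun p => ![p.2.1 + p.2.2 - (r - p.1.natAbs), (p.2.1 : ℤ) - p.2.2, p.1]) ?_ ?_ ?_ ?_
  · intro w hw
    simp only [coe_filter, Set.mem_ofPred_eq, mem_octahedron, Nat.ModEq, Fin.sum_univ_three,
      Pi.add_apply, Pi.smul_apply] at hw
    simp only [Matrix.cons_val_zero, Matrix.cons_val_one, Matrix.cons_val_two, Matrix.head_cons,
      Matrix.tail_cons, Nat.smul_one_eq_cast, smul_zero, add_zero] at hw
    simp only [coe_sigma, coe_Icc, coe_product, coe_range, Set.mem_sigma_iff, Set.mem_Icc,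
      Set.mem_prod, Set.mem_Iio]
    obtain ⟨⟨hle, -⟩, hle', -⟩ := hw
    omega
  · rintro ⟨z, a, b⟩ hp
    simp only [coe_sigma, coe_Icc, coe_product, coe_range, Set.mem_sigma_iff, Set.mem_Icc,
      Set.mem_prod, Set.mem_Iio] at hp
    simp only [coe_filter, Set.mem_ofPred_eq, mem_octahedron, Nat.ModEq, Fin.sum_univ_three,
      Pi.add_apply, Pi.smul_apply]
    simp only [Matrix.cons_val_zero, Matrix.cons_val_one, Matrix.cons_val_two, Matrix.head_cons,
      Matrix.tail_cons, Nat.smul_one_eq_cast, smul_zero, add_zero]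
    omega
  · intro w hw
    obtain ⟨hle, hpar⟩ := mem_octahedron.mp (mem_filter.mp hw).1
    simp only [Nat.ModEq, Fin.sum_univ_three] at hle hpar
    funext i
    fin_cases i <;> simp only [Fin.isValue, Fin.zero_eta, Fin.mk_one, Fin.reduceFinMk,
      Matrix.cons_val, Matrix.cons_val_zero, Matrix.cons_val_one, Int.ofNat_toNat] <;> omega
  · rintro ⟨z, a, b⟩ hp
    simp only [coe_sigma, coe_Icc, coe_product, coe_range, Set.mem_sigma_iff, Set.mem_Icc,
      Set.mem_prod, Set.mem_Iio] at hp
    simp only [Fin.isValue, Matrix.cons_val, Matrix.cons_val_zero, Matrix.cons_val_one,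
      Sigma.mk.injEq, heq_eq_eq, Prod.mk.injEq, true_and]
    omega

lemma three_mul_sum_Icc_sq (r : ℕ) :
    3 * ∑ z ∈ Icc (-(r : ℤ)) r, (r - z.natAbs + 1) ^ 2 = (r + 1) * (2 * (r + 1) ^ 2 + 1) := by
  rw [sum_Icc_natAbs (fun j => (j + 1) ^ 2)]
  induction r with
  | zero => simp
  | succ r ih => simp only [sum_range_succ, smul_eq_mul] at ih ⊢; linarith

lemma three_mul_sum_Icc_mul_succ (r : ℕ) :
    3 * ∑ z ∈ Icc (-(r : ℤ)) r, (r - z.natAbs) * (r - z.natAbs + 1) =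
      r * (r + 1) * (2 * r + 1) := by
  rw [sum_Icc_natAbs (fun j => j * (j + 1))]
  induction r with
  | zero => simp
  | succ r ih => simp only [sum_range_succ, smul_eq_mul] at ih ⊢; linarith

lemma three_mul_card_octahedron (r : ℕ) :
    3 * #(octahedron r) = (r + 1) * (2 * (r + 1) ^ 2 + 1) := by
  have h := card_octahedron_filter_add_smul_mem r 0
  simp only [zero_smul, add_zero, filter_true_of_mem fun _ => id, Nat.sub_zero] at h
  rw [h, ← three_mul_sum_Icc_sq]
  simp only [sq]

lemma three_mul_card_octahedron_filter_add_mem (r : ℕ) :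
    3 * #((octahedron r).filter fun w => w + ![1, 1, 0] ∈ octahedron r) =
      r * (r + 1) * (2 * r + 1) := by
  have h := card_octahedron_filter_add_smul_mem r 1
  simp only [one_smul, Nat.add_sub_cancel] at h
  rw [h, three_mul_sum_Icc_mul_succ]

-- The shift by `(r, 0, 0)` makes the coordinate sum even: it is `≡ |w|₁ ≡ r (mod 2)`.
def octahedralCluster (r : ℕ) : Finset (EuclideanSpace ℝ (Fin 3)) :=
  (octahedron r).image fun w => scaleSqrtTwo (w + Pi.single 0 (r : ℤ))

lemma octahedralCluster_subset_fccLattice (r : ℕ) : ↑(octahedralCluster r) ⊆ fccLattice := by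
  intro x hx
  obtain ⟨w, hw, rfl⟩ := mem_image.mp hx
  refine mem_fccLattice_iff.mpr ⟨_, ?_, rfl⟩
  obtain ⟨-, hpar⟩ := mem_octahedron.mp hw
  simp only [Nat.ModEq, Fin.sum_univ_three] at hpar
  rw [Fin.sum_univ_three, Int.even_iff]
  simp only [Pi.add_apply, Pi.single_apply, Fin.isValue, Fin.reduceEq, ↓reduceIte, add_zero]
  omega

lemma card_octahedralCluster (r : ℕ) : #(octahedralCluster r) = #(octahedron r) :=
  card_image_of_injective _ (scaleSqrtTwo_add_injective _)

lemma contactsOrdered_octahedralCluster (r : ℕ) :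
    contactsOrdered (octahedralCluster r) =
      12 * #((octahedron r).filter fun w => w + ![1, 1, 0] ∈ octahedron r) := by
  rw [octahedralCluster, contactsOrdered_image _ (scaleSqrtTwo_add_injective _)]
  have hroots : ∀ p ∈ (octahedron r).offDiag, dist (scaleSqrtTwo (p.1 + Pi.single 0 (r : ℤ)))
      (scaleSqrtTwo (p.2 + Pi.single 0 (r : ℤ))) = 2 ↔ p.1 - p.2 ∈ d3Roots := fun p _ => by
    rw [dist_scaleSqrtTwo_eq_two_iff, mem_d3Roots]
    simp
  rw [filter_congr hroots, card_offDiag_filter_sub_mem _ _ (by decide),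
    sum_congr rfl fun δ hδ => card_octahedron_filter_add_mem_of_mem_d3Roots r hδ, sum_const,
    card_d3Roots, smul_eq_mul]

/-- For every `k ≥ 2` and `n = k(2k²+1)/3` there is an `n`-point subset of the fcc
lattice with exactly `2k(2k²-3k+1)` pairs at distance `2`; moreover
`2k(2k²-3k+1) > 6n - 486^(1/3) n^(2/3)`. -/
theorem fcc_octahedral_lower_bound (k n : ℕ) (hk : 2 ≤ k)
    (hn : 3 * n = k * (2 * k ^ 2 + 1)) :
    (∃ P : Finset (EuclideanSpace ℝ (Fin 3)), ↑P ⊆ fccLattice ∧ P.card = n ∧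
        (∀ x ∈ P, ∀ y ∈ P, x ≠ y → 2 ≤ dist x y) ∧
        contactsOrdered P = 2 * (2 * k * (2 * k ^ 2 - 3 * k + 1))) ∧
      (6 * n - (486 : ℝ) ^ ((1 : ℝ) / 3) * (n : ℝ) ^ ((2 : ℝ) / 3) <
        (2 * k * (2 * k ^ 2 - 3 * k + 1) : ℕ)) := by
  obtain ⟨r, rfl⟩ : ∃ r, k = r + 1 := ⟨k - 1, by omega⟩
  have hfactor : 2 * (r + 1) * (2 * (r + 1) ^ 2 - 3 * (r + 1) + 1) =
      2 * (r + 1) * r * (2 * r + 1) := by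
    have : 3 * (r + 1) ≤ 2 * (r + 1) ^ 2 := by nlinarith
    zify [this]; ring
  have hcard := three_mul_card_octahedron r
  have hpairs := three_mul_card_octahedron_filter_add_mem r
  have hsub := octahedralCluster_subset_fccLattice r
  refine ⟨⟨octahedralCluster r, hsub, ?_, fun x hx y hy =>
    two_le_dist_of_mem_fccLattice (hsub hx) (hsub hy), ?_⟩, ?_⟩
  · rw [card_octahedralCluster]; linarith
  · rw [contactsOrdered_octahedralCluster, hfactor]; linarith
  · have hnR : (3 * n : ℝ) = (r + 1) * (2 * (r + 1) ^ 2 + 1) := by exact_mod_cast hn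
    have hlt : (6 * (r + 1) ^ 2 : ℝ) < 486 ^ (1 / 3 : ℝ) * n ^ (2 / 3 : ℝ) :=
      lt_rpow_mul_rpow_of_pow_lt (by positivity) (by norm_num) n.cast_nonneg (by nlinarith)
    rw [hfactor]; push_cast
    linarith
end
end

section
/- For n = 2, 3, 4, 5 the maximal contact numbers of packings of n unit balls in ℝ³ are 1, 3, 6, 9 respectively. -/
open scoped Classical

noncomputable section

/-!
A packing of `n` balls has at most `n (n - 1)` ordered contacts, which settles the upper bounds for
`n ≤ 4`. For `n = 5` not all ten pairs can touch: points of `ℝᵈ` at pairwise equal distance `r` are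
affinely independent, since their differences from one of them have Gram matrix `(r²/2)(I + J)`,
so there are at most `d + 1` of them. The lower bounds come from the vertices of a regular
tetrahedron of edge `2`, and for `n = 5` from the triangular bipyramid obtained by adding the
mirror image of one vertex in the opposite face, which touches the three vertices of that face.
-/

open Finset RealInnerProductSpace Module

section Equidistant

variable {E : Type*} [NormedAddCommGroup E] [InnerProductSpace ℝ E]

theorem inner_sub_sub_of_dist_eq {x y z : E} {r : ℝ} (hxy : dist y x = r) (hxz : dist z x = r)
    (hyz : dist y z = r) : ⟪y - x, z - x⟫ = r ^ 2 / 2 := by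
  have h := norm_sub_sq_real (y - x) (z - x)
  rw [sub_sub_sub_cancel_right, ← dist_eq_norm, ← dist_eq_norm, ← dist_eq_norm, hxy, hxz,
    hyz] at h
  linarith

theorem linearIndependent_of_inner_eq {ι : Type*} [Fintype ι] {v : ι → E} {c : ℝ} (hc : c ≠ 0)
    (hv : ∀ i j, ⟪v i, v j⟫ = c + if i = j then c else 0) : LinearIndependent ℝ v := by
  rw [Fintype.linearIndependent_iff]
  intro g hg
  have hcoeff : ∀ j, g j = -∑ i, g i := by
    intro j
    have h : c * (∑ i, g i + g j) = 0 := by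
      calc c * (∑ i, g i + g j) = ⟪∑ i, g i • v i, v j⟫ := by
            simp only [sum_inner, real_inner_smul_left, hv, mul_add, mul_ite, mul_zero,
              sum_add_distrib, sum_ite_eq', mem_univ, if_true, ← sum_mul]
            ring
        _ = 0 := by rw [hg, inner_zero_left]
    linarith [(mul_eq_zero.mp h).resolve_left hc]
  have hsum : ∑ i, g i = 0 := by
    have h : ∑ j, g j = ∑ _j : ι, -∑ i, g i := sum_congr rfl fun j _ => hcoeff j
    rw [sum_const, card_univ, nsmul_eq_mul] at h
    nlinarith [h]
  intro j
  rw [hcoeff j, hsum, neg_zero]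

theorem card_le_finrank_add_one_of_pairwise_dist_eq [FiniteDimensional ℝ E] {s : Finset E}
    {r : ℝ} (hr : r ≠ 0) (hs : (s : Set E).Pairwise fun x y => dist x y = r) :
    #s ≤ finrank ℝ E + 1 := by
  rcases s.eq_empty_or_nonempty with rfl | ⟨x₀, hx₀⟩
  · simp
  let v : s.erase x₀ → E := fun y => (y : E) - x₀
  have hv : LinearIndependent ℝ v := by
    refine linearIndependent_of_inner_eq (c := r ^ 2 / 2) (by positivity) fun y z => ?_
    have hy := mem_erase.mp y.2
    have hz := mem_erase.mp z.2
    split_ifs with hyz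
    · subst hyz
      rw [real_inner_self_eq_norm_sq, ← dist_eq_norm, hs hy.2 hx₀ hy.1]
      ring
    · rw [add_zero]
      exact inner_sub_sub_of_dist_eq (hs hy.2 hx₀ hy.1) (hs hz.2 hx₀ hz.1)
        (hs hy.2 hz.2 (Subtype.coe_injective.ne hyz))
  have := hv.fintype_card_le_finrank
  rw [Fintype.card_coe, card_erase_of_mem hx₀] at this
  omega

end Equidistant

section Contacts

variable {d : ℕ}

theorem contactsOrdered_le (P : Finset (EuclideanSpace ℝ (Fin d))) :
    contactsOrdered P ≤ #P * #P - #P :=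
  (card_filter_le _ _).trans (offDiag_card P).le

theorem contactsOrdered_le_sub_two_of_dist_ne {P : Finset (EuclideanSpace ℝ (Fin d))} {a b}
    (ha : a ∈ P) (hb : b ∈ P) (hab : a ≠ b) (hd : dist a b ≠ 2) :
    contactsOrdered P ≤ #P * #P - #P - 2 := by
  have hsub : P.offDiag.filter (fun p => dist p.1 p.2 = 2) ⊆
      P.offDiag \ {(a, b), (b, a)} := by
    intro p hp
    simp only [mem_filter, mem_sdiff, mem_insert, mem_singleton] at hp ⊢
    refine ⟨hp.1, ?_⟩
    rintro (rfl | rfl)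
    · exact hd hp.2
    · exact hd (dist_comm a b ▸ hp.2)
  have hpair : #({(a, b), (b, a)} : Finset _) = 2 :=
    card_pair fun h => hab (Prod.ext_iff.mp h).1
  calc contactsOrdered P ≤ #(P.offDiag \ {(a, b), (b, a)}) := card_le_card hsub
    _ = #P * #P - #P - 2 := by
      rw [card_sdiff_of_subset, hpair, offDiag_card]
      simp [insert_subset_iff, ha, hb, hab, hab.symm]

theorem contactsOrdered_le_sub_two_of_add_one_lt_card {P : Finset (EuclideanSpace ℝ (Fin d))}
    (hP : d + 1 < #P) : contactsOrdered P ≤ #P * #P - #P - 2 := by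
  have hnot : ¬(P : Set (EuclideanSpace ℝ (Fin d))).Pairwise fun x y => dist x y = 2 := by
    intro h
    have := card_le_finrank_add_one_of_pairwise_dist_eq two_ne_zero h
    rw [finrank_euclideanSpace_fin] at this
    omega
  obtain ⟨a, ha, b, hb, hab, hd⟩ : ∃ a ∈ P, ∃ b ∈ P, a ≠ b ∧ dist a b ≠ 2 := by
    simpa [Set.Pairwise] using hnot
  exact contactsOrdered_le_sub_two_of_dist_ne ha hb hab hd

theorem contactsOrdered_eq_of_pairwise_dist_eq_two {P : Finset (EuclideanSpace ℝ (Fin d))}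
    (hP : (P : Set (EuclideanSpace ℝ (Fin d))).Pairwise fun x y => dist x y = 2) :
    contactsOrdered P = #P * #P - #P := by
  rw [contactsOrdered, filter_true_of_mem, offDiag_card]
  intro p hp
  obtain ⟨h1, h2, h12⟩ := mem_offDiag.mp hp
  exact hP h1 h2 h12

theorem contactsOrdered_insert {P : Finset (EuclideanSpace ℝ (Fin d))} {a} (ha : a ∉ P) :
    contactsOrdered (insert a P) = contactsOrdered P + 2 * #(P.filter fun x => dist a x = 2) := by
  have h₁ : Disjoint P.offDiag ({a} ×ˢ P) := by
    simp only [disjoint_left, mem_offDiag, mem_product, mem_singleton]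
    rintro ⟨x, y⟩ ⟨hx, -, -⟩ ⟨rfl, -⟩
    exact ha hx
  have h₂ : Disjoint (P.offDiag ∪ {a} ×ˢ P) (P ×ˢ {a}) := by
    simp only [disjoint_left, mem_union, mem_offDiag, mem_product, mem_singleton]
    rintro ⟨x, y⟩ (⟨-, hy, -⟩ | ⟨-, hy⟩) ⟨-, rfl⟩ <;> exact ha hy
  rw [contactsOrdered, contactsOrdered, offDiag_insert ha, filter_union,
    card_union_of_disjoint (disjoint_filter_filter h₂), filter_union,
    card_union_of_disjoint (disjoint_filter_filter h₁), singleton_product, product_singleton,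
    filter_map, filter_map, card_map, card_map]
  simp only [Function.comp_def, Function.Embedding.coeFn_mk, dist_comm _ a]
  ring

end Contacts

theorem dist_vec3 (x₁ y₁ z₁ x₂ y₂ z₂ : ℝ) :
    dist !₂[x₁, y₁, z₁] !₂[x₂, y₂, z₂] = √((x₁ - x₂) ^ 2 + (y₁ - y₂) ^ 2 + (z₁ - z₂) ^ 2) := by
  simp [EuclideanSpace.dist_eq, Fin.sum_univ_three, Real.dist_eq, sq_abs]

theorem dist_vec3_eq_two {x₁ y₁ z₁ x₂ y₂ z₂ : ℝ}
    (h : (x₁ - x₂) ^ 2 + (y₁ - y₂) ^ 2 + (z₁ - z₂) ^ 2 = 4) :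
    dist !₂[x₁, y₁, z₁] !₂[x₂, y₂, z₂] = 2 := by
  rw [dist_vec3, h, show (4 : ℝ) = 2 ^ 2 by norm_num, Real.sqrt_sq zero_le_two]

def tetrahedron : Fin 4 → EuclideanSpace ℝ (Fin 3) :=
  ![!₂[0, 0, 0], !₂[√2, √2, 0], !₂[√2, 0, √2], !₂[0, √2, √2]]

/-- The mirror image of `tetrahedron 0` in the plane of the other three vertices. -/
def apex : EuclideanSpace ℝ (Fin 3) := !₂[4 * √2 / 3, 4 * √2 / 3, 4 * √2 / 3]

theorem dist_tetrahedron {i j : Fin 4} (hij : i ≠ j) :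
    dist (tetrahedron i) (tetrahedron j) = 2 := by
  have h := Real.sq_sqrt zero_le_two
  fin_cases i <;> fin_cases j <;> first
    | exact absurd rfl hij
    | exact dist_vec3_eq_two (by linear_combination 2 * h)

theorem dist_apex_tetrahedron {i : Fin 4} (hi : i ≠ 0) : dist apex (tetrahedron i) = 2 := by
  have h := Real.sq_sqrt zero_le_two
  fin_cases i
  · exact absurd rfl hi
  all_goals exact dist_vec3_eq_two (by linear_combination 2 * h)

theorem two_lt_dist_apex_tetrahedron_zero : 2 < dist apex (tetrahedron 0) := by
  have h := Real.sq_sqrt zero_le_two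
  rw [apex, tetrahedron, Matrix.cons_val_zero, dist_vec3, Real.lt_sqrt zero_le_two]
  nlinarith

theorem tetrahedron_injective : Function.Injective tetrahedron := by
  intro i j hij
  by_contra hne
  have h := dist_tetrahedron hne
  rw [hij, dist_self] at h
  norm_num at h

theorem two_le_dist_apex_tetrahedron (i : Fin 4) : 2 ≤ dist apex (tetrahedron i) := by
  rcases eq_or_ne i 0 with rfl | hi
  · exact two_lt_dist_apex_tetrahedron_zero.le
  · exact (dist_apex_tetrahedron hi).ge

theorem pairwise_dist_image_tetrahedron (S : Finset (Fin 4)) :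
    ((S.image tetrahedron : Finset _) : Set (EuclideanSpace ℝ (Fin 3))).Pairwise
      fun x y => dist x y = 2 := by
  rw [coe_image]
  rintro _ ⟨i, -, rfl⟩ _ ⟨j, -, rfl⟩ hij
  exact dist_tetrahedron (ne_of_apply_ne _ hij)

theorem exists_packing_card_eq_contactsOrdered_eq_of_le_four {n : ℕ} (hn : n ≤ 4) :
    ∃ P : Finset (EuclideanSpace ℝ (Fin 3)),
      (P : Set (EuclideanSpace ℝ (Fin 3))).Pairwise (fun x y => 2 ≤ dist x y) ∧ #P = n ∧
        contactsOrdered P = n * n - n := by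
  obtain ⟨S, -, hS⟩ := exists_subset_card_eq (s := (univ : Finset (Fin 4))) (by simpa using hn)
  have hcard : #(S.image tetrahedron) = n := by
    rw [card_image_of_injective _ tetrahedron_injective, hS]
  refine ⟨S.image tetrahedron, (pairwise_dist_image_tetrahedron S).mono' fun x y h => h.ge,
    hcard, ?_⟩
  rw [contactsOrdered_eq_of_pairwise_dist_eq_two (pairwise_dist_image_tetrahedron S), hcard]

theorem exists_packing_card_five_contactsOrdered_eq_eighteen :
    ∃ P : Finset (EuclideanSpace ℝ (Fin 3)),
      (P : Set (EuclideanSpace ℝ (Fin 3))).Pairwise (fun x y => 2 ≤ dist x y) ∧ #P = 5 ∧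
        contactsOrdered P = 18 := by
  set T := univ.image tetrahedron
  have hT : #T = 4 := by rw [card_image_of_injective _ tetrahedron_injective, card_fin]
  have hapex : apex ∉ T := by
    simp only [T, mem_image, mem_univ, true_and, not_exists]
    intro i h
    have := two_le_dist_apex_tetrahedron i
    rw [← h, dist_self] at this
    norm_num at this
  have hneighbours : #(T.filter fun x => dist apex x = 2) = 3 := by
    have hfilter : (univ.filter fun i => dist apex (tetrahedron i) = 2) = univ.erase 0 := by
      ext i
      rcases eq_or_ne i 0 with rfl | hi
      · simp [two_lt_dist_apex_tetrahedron_zero.ne']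
      · simp [hi, dist_apex_tetrahedron hi]
    rw [filter_image, card_image_of_injective _ tetrahedron_injective, hfilter,
      card_erase_of_mem (mem_univ 0), card_fin]
  refine ⟨insert apex T, ?_, by rw [card_insert_of_notMem hapex, hT], ?_⟩
  · rw [coe_insert, Set.pairwise_insert]
    refine ⟨(pairwise_dist_image_tetrahedron univ).mono' fun x y h => h.ge, ?_⟩
    rintro _ hx -
    obtain ⟨i, -, rfl⟩ := mem_image.mp hx
    exact ⟨two_le_dist_apex_tetrahedron i, dist_comm apex _ ▸ two_le_dist_apex_tetrahedron i⟩
  · rw [contactsOrdered_insert hapex, hneighbours,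
      contactsOrdered_eq_of_pairwise_dist_eq_two (pairwise_dist_image_tetrahedron univ), hT]

/-- For `n = 2, 3, 4, 5`, the maximal contact number of a packing of `n` unit balls
in `ℝ³` is `1, 3, 6, 9` respectively. -/
theorem small_contact_numbers_space :
    ∀ p ∈ [((2 : ℕ), (1 : ℕ)), (3, 3), (4, 6), (5, 9)],
      (∀ P : Finset (EuclideanSpace ℝ (Fin 3)),
          (∀ x ∈ P, ∀ y ∈ P, x ≠ y → 2 ≤ dist x y) → P.card = p.1 →
          contactsOrdered P ≤ 2 * p.2) ∧
      (∃ P : Finset (EuclideanSpace ℝ (Fin 3)),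
          (∀ x ∈ P, ∀ y ∈ P, x ≠ y → 2 ≤ dist x y) ∧ P.card = p.1 ∧
          contactsOrdered P = 2 * p.2) := by
  intro p hp
  fin_cases hp
  iterate 3
    exact ⟨fun P _ hP => (contactsOrdered_le P).trans (by simp [hP]),
      exists_packing_card_eq_contactsOrdered_eq_of_le_four (by norm_num)⟩
  exact ⟨fun P _ hP => (contactsOrdered_le_sub_two_of_add_one_lt_card (by simp [hP])).trans
    (by simp [hP]), exists_packing_card_five_contactsOrdered_eq_eighteen⟩
end
end

section
/- For all n ≥ 2, the maximum number of shared facets among the cells of a polyomino consisting of n cells of the square lattice ℤ² equals ⌊2n − 2√n⌋. -/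
/-!
Write `H` and `V` for the numbers of horizontally and vertically adjacent pairs of cells of `P`,
so that `adjPairsZ2 P = 2 (H + V)`. The leftmost cell of each of the `r` occupied rows has no
left neighbour, so `H + r ≤ |P|`; likewise `V + c ≤ |P|` for the `c` occupied columns. As
`|P| ≤ r c`, AM-GM gives `r + c ≥ ⌈2 √|P|⌉`, hence `H + V ≤ 2 |P| - ⌈2 √|P|⌉ = ⌊2 |P| - 2 √|P|⌋`.
Equality holds for `a` full rows of length `b` topped by a partial row, where `a + b + 1 = ⌈2 √n⌉`.
-/

open scoped Classical

noncomputable section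

/-- Twice the number of shared facets: ordered pairs of distinct points of `P ⊆ ℤ²`
at Euclidean distance exactly `1`. -/
def adjPairsZ2 (P : Finset (ℤ × ℤ)) : ℕ :=
  (P.offDiag.filter fun p => (p.1.1 - p.2.1) ^ 2 + (p.1.2 - p.2.2) ^ 2 = 1).card

open Finset

section AddCommGroup

variable {V : Type*} [AddCommGroup V] [DecidableEq V]

def edgeCount (P : Finset V) (d : V) : ℕ := #(P.filter fun p => p + d ∈ P)

theorem edgeCount_neg (P : Finset V) (d : V) : edgeCount P (-d) = edgeCount P d :=
  card_nbij' (· + -d) (· + d)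
    (fun p hp => by simp_all)
    (fun p hp => by simp_all)
    (fun p _ => by simp) (fun p _ => by simp)

theorem card_image_le_card_filter_sub_notMem {α β : Type*} [LinearOrder α] [DecidableEq β]
    (P : Finset V) (d : V) (f : V → α) (g : V → β) (hf : ∀ p, f (p - d) < f p)
    (hg : ∀ p, g (p - d) = g p) :
    #(P.image g) ≤ #(P.filter fun p => p - d ∉ P) := by
  refine (card_le_card fun y hy => ?_).trans
    (card_image_le (s := P.filter fun p => p - d ∉ P) (f := g))
  obtain ⟨p, hp, rfl⟩ := mem_image.mp hy
  obtain ⟨m, hm, hmin⟩ := (P.filter fun q => g q = g p).exists_min_image f ⟨p, by simp [hp]⟩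
  rw [mem_filter] at hm
  refine mem_image.mpr ⟨m, mem_filter.mpr ⟨hm.1, fun hprev => ?_⟩, hm.2⟩
  exact (hf m).not_ge (hmin (m - d) (mem_filter.mpr ⟨hprev, (hg m).trans hm.2⟩))

theorem edgeCount_add_card_image_le {α β : Type*} [LinearOrder α] [DecidableEq β]
    (P : Finset V) (d : V) (f : V → α) (g : V → β) (hf : ∀ p, f (p - d) < f p)
    (hg : ∀ p, g (p - d) = g p) :
    edgeCount P d + #(P.image g) ≤ #P := by
  have hsplit := card_filter_add_card_filter_not (s := P) fun p => p - d ∈ P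
  have hback : #(P.filter fun p => p - d ∈ P) = edgeCount P d := by
    rw [← edgeCount_neg]
    simp only [edgeCount, sub_eq_add_neg]
  have := card_image_le_card_filter_sub_notMem P d f g hf hg
  omega

end AddCommGroup

def unitVectors : Finset (ℤ × ℤ) := {(1, 0), (-1, 0), (0, 1), (0, -1)}

theorem sq_add_sq_eq_one_iff_mem_unitVectors (v : ℤ × ℤ) :
    v.1 ^ 2 + v.2 ^ 2 = 1 ↔ v ∈ unitVectors := by
  obtain ⟨a, b⟩ := v
  simp only [unitVectors, mem_insert, mem_singleton, Prod.mk.injEq]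
  constructor
  · intro h
    have ha : -1 ≤ a ∧ a ≤ 1 := by constructor <;> nlinarith [sq_nonneg b]
    have hb : -1 ≤ b ∧ b ≤ 1 := by constructor <;> nlinarith [sq_nonneg a]
    obtain ⟨ha₁, ha₂⟩ := ha
    obtain ⟨hb₁, hb₂⟩ := hb
    interval_cases a <;> interval_cases b <;> simp_all
  · rintro (⟨rfl, rfl⟩ | ⟨rfl, rfl⟩ | ⟨rfl, rfl⟩ | ⟨rfl, rfl⟩) <;> norm_num

theorem adjPairsZ2_eq_sum_edgeCount (P : Finset (ℤ × ℤ)) :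
    adjPairsZ2 P = ∑ d ∈ unitVectors, edgeCount P d := by
  have hpairs : adjPairsZ2 P = #((P ×ˢ unitVectors).filter fun x => x.1 + x.2 ∈ P) := by
    refine card_nbij' (fun x => (x.2, x.1 - x.2)) (fun x => (x.1 + x.2, x.1)) ?_ ?_ ?_ ?_
    · rintro ⟨p, q⟩ h
      simp only [coe_filter, mem_offDiag, Set.mem_ofPred_eq] at h
      simp only [coe_filter, mem_product, Set.mem_ofPred_eq, add_sub_cancel,
        ← sq_add_sq_eq_one_iff_mem_unitVectors, Prod.fst_sub, Prod.snd_sub]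
      exact ⟨⟨h.1.2.1, h.2⟩, h.1.1⟩
    · rintro ⟨r, d⟩ h
      simp only [coe_filter, mem_product, Set.mem_ofPred_eq] at h
      have hd := (sq_add_sq_eq_one_iff_mem_unitVectors d).mpr h.1.2
      simp only [coe_filter, mem_offDiag, Set.mem_ofPred_eq, Prod.fst_add, Prod.snd_add,
        add_sub_cancel_left]
      refine ⟨⟨h.2, h.1.1, fun hrd => ?_⟩, hd⟩
      simp [add_eq_left.mp hrd] at hd
    · rintro ⟨p, q⟩ _; simp
    · rintro ⟨r, d⟩ _; simp
  rw [hpairs, card_filter, sum_product_right]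
  exact sum_congr rfl fun d _ => (card_filter (fun p => p + d ∈ P) P).symm

theorem adjPairsZ2_eq (P : Finset (ℤ × ℤ)) :
    adjPairsZ2 P = 2 * (edgeCount P (1, 0) + edgeCount P (0, 1)) := by
  rw [adjPairsZ2_eq_sum_edgeCount, unitVectors, sum_insert (by decide), sum_insert (by decide),
    sum_insert (by decide), sum_singleton]
  have hx := edgeCount_neg P (1, 0)
  have hy := edgeCount_neg P (0, 1)
  simp only [Prod.neg_mk, neg_zero] at hx hy
  rw [hx, hy]
  ring

theorem ceil_two_mul_sqrt_le_iff {n : ℕ} {s : ℤ} (hs : 0 ≤ s) :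
    ⌈2 * √(n : ℝ)⌉ ≤ s ↔ 4 * (n : ℤ) ≤ s ^ 2 := by
  rw [Int.ceil_le, ← le_div_iff₀' two_pos, Real.sqrt_le_left (by positivity), div_pow,
    le_div_iff₀ (by positivity)]
  norm_cast
  rw [mul_comm, show 2 ^ 2 = 4 from rfl]

theorem floor_intCast_sub_eq_sub_ceil {R : Type*} [Ring R] [LinearOrder R] [IsOrderedRing R]
    [FloorRing R] (z : ℤ) (a : R) : ⌊(z : R) - a⌋ = z - ⌈a⌉ := by
  rw [sub_eq_add_neg, Int.floor_intCast_add, Int.floor_neg, sub_eq_add_neg]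

theorem edgeCount_add_edgeCount_add_ceil_le (P : Finset (ℤ × ℤ)) :
    (edgeCount P (1, 0) + edgeCount P (0, 1) : ℤ) + ⌈2 * √(#P : ℝ)⌉ ≤ 2 * #P := by
  have hrow := edgeCount_add_card_image_le P (1, 0) Prod.fst Prod.snd (by simp) (by simp)
  have hcol := edgeCount_add_card_image_le P (0, 1) Prod.snd Prod.fst (by simp) (by simp)
  have hgrid : #P ≤ #(P.image Prod.fst) * #(P.image Prod.snd) :=
    (card_le_card subset_product).trans_eq (card_product _ _)
  have hceil : ⌈2 * √(#P : ℝ)⌉ ≤ #(P.image Prod.fst) + #(P.image Prod.snd) := by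
    refine (ceil_two_mul_sqrt_le_iff (by positivity)).mpr ?_
    have : (#P : ℤ) ≤ #(P.image Prod.fst) * #(P.image Prod.snd) := by exact_mod_cast hgrid
    nlinarith [sq_nonneg ((#(P.image Prod.fst) : ℤ) - #(P.image Prod.snd))]
  omega

def quasiSquare (a b t : ℤ) : Finset (ℤ × ℤ) := Ico 0 b ×ˢ Ico 0 a ∪ Ico 0 t ×ˢ {a}

theorem mem_quasiSquare {a b t x y : ℤ} :
    (x, y) ∈ quasiSquare a b t ↔ 0 ≤ x ∧ x < b ∧ 0 ≤ y ∧ y < a ∨ 0 ≤ x ∧ x < t ∧ y = a := by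
  simp only [quasiSquare, mem_union, mem_product, mem_Ico, mem_singleton]
  omega

theorem card_quasiSquare {a b t : ℤ} (ha : 0 ≤ a) (hb : 0 ≤ b) (ht : 0 ≤ t) :
    (#(quasiSquare a b t) : ℤ) = a * b + t := by
  rw [quasiSquare, card_union_of_disjoint]
  · simp only [card_product, Int.card_Ico, card_singleton, sub_zero]
    push_cast [Int.toNat_of_nonneg, ha, hb, ht]
    ring
  · rw [disjoint_left]
    rintro ⟨x, y⟩ h h'
    simp only [mem_product, mem_Ico, mem_singleton] at h h'
    omega

theorem edgeCount_quasiSquare_right {a b t : ℤ} (ha : 1 ≤ a) (ht : 1 ≤ t) (htb : t ≤ b) :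
    (edgeCount (quasiSquare a b t) (1, 0) : ℤ) = a * (b - 1) + (t - 1) := by
  have : (quasiSquare a b t).filter (fun p => p + (1, 0) ∈ quasiSquare a b t) =
      quasiSquare a (b - 1) (t - 1) := by
    ext ⟨x, y⟩
    simp only [mem_filter, Prod.mk_add_mk, add_zero, mem_quasiSquare]
    omega
  rw [edgeCount, this, card_quasiSquare] <;> omega

theorem edgeCount_quasiSquare_up {a b t : ℤ} (ha : 1 ≤ a) (ht : 1 ≤ t) (htb : t ≤ b) :
    (edgeCount (quasiSquare a b t) (0, 1) : ℤ) = (a - 1) * b + t := by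
  have : (quasiSquare a b t).filter (fun p => p + (0, 1) ∈ quasiSquare a b t) =
      quasiSquare (a - 1) b t := by
    ext ⟨x, y⟩
    simp only [mem_filter, Prod.mk_add_mk, add_zero, mem_quasiSquare]
    omega
  rw [edgeCount, this, card_quasiSquare] <;> omega

theorem exists_quasiSquare_dims {n : ℕ} (hn : 2 ≤ n) :
    ∃ a b t : ℤ, 1 ≤ a ∧ 1 ≤ t ∧ t ≤ b ∧ a * b + t = n ∧ a + b + 1 = ⌈2 * √(n : ℝ)⌉ := by
  set s := ⌈2 * √(n : ℝ)⌉
  have hs : 0 ≤ s := Int.ceil_nonneg (by positivity)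
  have hhi : 4 * (n : ℤ) ≤ s ^ 2 := (ceil_two_mul_sqrt_le_iff hs).mp le_rfl
  have hs3 : 3 ≤ s := by nlinarith
  have hlo : (s - 1) ^ 2 < 4 * (n : ℤ) := by
    by_contra! h
    have := (ceil_two_mul_sqrt_le_iff (by omega)).mpr h
    omega
  -- `a + b = s - 1` with `a, b` as equal as possible: `(s - 1)² < 4n ≤ s²` is `ab < n ≤ (a + 1)b`.
  obtain ⟨m, hm | hm⟩ := Int.even_or_odd' s
  · refine ⟨m - 1, m, n - (m - 1) * m, by omega, ?_, ?_, by ring, by omega⟩ <;>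
      · rw [hm] at hhi hlo; nlinarith
  · refine ⟨m, m, n - m * m, by omega, ?_, ?_, by ring, by omega⟩ <;>
      · rw [hm] at hhi hlo; nlinarith

theorem exists_edgeCount_add_edgeCount_add_ceil_eq {n : ℕ} (hn : 2 ≤ n) :
    ∃ P : Finset (ℤ × ℤ), #P = n ∧
      (edgeCount P (1, 0) + edgeCount P (0, 1) : ℤ) + ⌈2 * √(n : ℝ)⌉ = 2 * n := by
  obtain ⟨a, b, t, ha, ht, htb, hcard, hceil⟩ := exists_quasiSquare_dims hn
  refine ⟨quasiSquare a b t, ?_, ?_⟩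
  · rw [← Int.natCast_inj, card_quasiSquare, hcard] <;> omega
  · rw [edgeCount_quasiSquare_right ha ht htb, edgeCount_quasiSquare_up ha ht htb, ← hceil,
      ← hcard]
    ring

/-- The maximum number of shared facets among `n ≥ 2` cells of the square lattice `ℤ²`
equals `⌊2n - 2√n⌋`. -/
theorem polyomino_max_shared_facets (n : ℕ) (hn : 2 ≤ n) :
    (∀ P : Finset (ℤ × ℤ), P.card = n →
        (adjPairsZ2 P : ℤ) ≤ 2 * ⌊(2 * n - 2 * Real.sqrt n : ℝ)⌋) ∧
      ∃ P : Finset (ℤ × ℤ), P.card = n ∧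
        (adjPairsZ2 P : ℤ) = 2 * ⌊(2 * n - 2 * Real.sqrt n : ℝ)⌋ := by
  have hfloor : ⌊(2 * n - 2 * Real.sqrt n : ℝ)⌋ = 2 * n - ⌈2 * √(n : ℝ)⌉ := by
    exact_mod_cast floor_intCast_sub_eq_sub_ceil (2 * n) (2 * √(n : ℝ))
  simp only [hfloor, adjPairsZ2_eq, Nat.cast_mul, Nat.cast_add, Nat.cast_ofNat]
  refine ⟨fun P hP => ?_, ?_⟩
  · have := edgeCount_add_edgeCount_add_ceil_le P
    rw [hP] at this
    linarith
  · obtain ⟨P, hP, hedges⟩ := exists_edgeCount_add_edgeCount_add_ceil_eq hn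
    exact ⟨P, hP, by linarith⟩
end
end

section
/- For all n > 1 and d ≥ 2, the maximum number of pairs of points at distance exactly 1 among n points of the integer lattice ℤ^d is at most ⌊dn − d·n^((d−1)/d)⌋. -/
/-!
An adjacent pair is a unit step `p ↦ p + eᵢ` inside `P`. Fixing the direction `i`, the points of
`P` fall into lines parallel to `eᵢ`, and a line with `m` points carries at most `m - 1` steps, so
there are at most `|P| - |πᵢ P|` steps in direction `i`, where `πᵢ` projects along `eᵢ`. Summing,
the number of adjacent pairs is at most `d|P| - ∑ᵢ |πᵢ P|`. The discrete Loomis–Whitney inequality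
`|P|^(d-1) ≤ ∏ᵢ |πᵢ P|`, proved by slicing `P` perpendicular to one axis and applying Hölder's
inequality to the slices, turns by AM–GM into `∑ᵢ |πᵢ P| ≥ d |P|^((d-1)/d)`.
-/

open scoped Classical

noncomputable section

/-- Twice the number of adjacent pairs: ordered pairs of distinct points of `P ⊆ ℤ^d`
at Euclidean distance exactly `1`. -/
def adjPairsZ {d : ℕ} (P : Finset (Fin d → ℤ)) : ℕ :=
  (P.offDiag.filter fun p => (∑ i, (p.1 i - p.2 i) ^ 2) = 1).card

open Finset

theorem sum_prod_rpow_inv_card_le_prod_sum_rpow {τ ι : Type*} (T : Finset τ) {s : Finset ι}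
    (hs : s.Nonempty) (a : ι → τ → ℝ) (ha : ∀ i ∈ s, ∀ t ∈ T, 0 ≤ a i t) :
    ∑ t ∈ T, ∏ i ∈ s, a i t ^ (#s : ℝ)⁻¹ ≤ ∏ i ∈ s, (∑ t ∈ T, a i t) ^ (#s : ℝ)⁻¹ := by
  set w : ℝ := (#s : ℝ)⁻¹
  set A : ι → ℝ := fun i => ∑ t ∈ T, a i t
  have hA : ∀ i ∈ s, 0 ≤ A i := fun i hi => sum_nonneg (ha i hi)
  have hw : 0 < w := by positivity
  -- When `A i = 0` every `a i t` vanishes, so this also holds with the junk value `x / 0 = 0`.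
  have factor : ∀ t ∈ T, ∀ i ∈ s, a i t ^ w = A i ^ w * (a i t / A i) ^ w := by
    intro t ht i hi
    rcases (hA i hi).eq_or_lt with h0 | hpos
    · have : a i t = 0 := (sum_eq_zero_iff_of_nonneg (ha i hi)).mp h0.symm t ht
      simp [this, Real.zero_rpow hw.ne']
    · rw [← Real.mul_rpow (hA i hi) (div_nonneg (ha i hi t ht) hpos.le), mul_div_cancel₀ _ hpos.ne']
  have amgm : ∀ t ∈ T, ∏ i ∈ s, (a i t / A i) ^ w ≤ ∑ i ∈ s, w * (a i t / A i) := fun t ht =>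
    Real.geom_mean_le_arith_mean_weighted s (fun _ => w) _ (fun _ _ => hw.le)
      (by simp [w, sum_const, hs.card_pos.ne']) (fun i hi => div_nonneg (ha i hi t ht) (hA i hi))
  have normalised : ∑ t ∈ T, ∑ i ∈ s, w * (a i t / A i) ≤ 1 := by
    rw [sum_comm]
    calc ∑ i ∈ s, ∑ t ∈ T, w * (a i t / A i) = ∑ i ∈ s, w * (A i / A i) := by
          simp only [← mul_sum, ← sum_div, A]
      _ ≤ ∑ i ∈ s, w := sum_le_sum fun i _ => mul_le_of_le_one_right hw.le (div_self_le_one _)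
      _ = 1 := by simp [w, sum_const, hs.card_pos.ne']
  have hAw : 0 ≤ ∏ i ∈ s, A i ^ w := prod_nonneg fun i hi => Real.rpow_nonneg (hA i hi) w
  calc ∑ t ∈ T, ∏ i ∈ s, a i t ^ w
      = ∑ t ∈ T, (∏ i ∈ s, A i ^ w) * ∏ i ∈ s, (a i t / A i) ^ w := by
        refine sum_congr rfl fun t ht => ?_
        rw [← prod_mul_distrib]
        exact prod_congr rfl (factor t ht)
    _ ≤ ∑ t ∈ T, (∏ i ∈ s, A i ^ w) * ∑ i ∈ s, w * (a i t / A i) :=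
        sum_le_sum fun t ht => mul_le_mul_of_nonneg_left (amgm t ht) hAw
    _ ≤ ∏ i ∈ s, A i ^ w := by
        rw [← mul_sum]
        exact mul_le_of_le_one_right hAw normalised

theorem card_mul_prod_rpow_inv_card_le_sum {ι : Type*} {s : Finset ι} (hs : s.Nonempty)
    (z : ι → ℝ) (hz : ∀ i ∈ s, 0 ≤ z i) :
    #s * (∏ i ∈ s, z i) ^ (#s : ℝ)⁻¹ ≤ ∑ i ∈ s, z i := by
  have hcard : (0 : ℝ) < #s := by exact_mod_cast hs.card_pos
  have := Real.geom_mean_le_arith_mean s (fun _ => 1) z (fun _ _ => zero_le_one)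
    (by simpa using hcard) hz
  simp only [Real.rpow_one, sum_const, nsmul_eq_mul, mul_one, one_mul] at this
  rwa [le_div_iff₀ hcard, mul_comm] at this

theorem sum_pow_card_le_of_pow_card_le {τ ι : Type*} (T : Finset τ) {s : Finset ι}
    (hs : s.Nonempty) {x : τ → ℝ} {b : ι → τ → ℝ} {a : ℝ} (c : ι → ℝ) (hx : ∀ t ∈ T, 0 ≤ x t)
    (hb : ∀ i ∈ s, ∀ t ∈ T, 0 ≤ b i t) (ha : 0 ≤ a)
    (hxb : ∀ t ∈ T, x t ^ #s ≤ a * ∏ i ∈ s, b i t) (hbc : ∀ i ∈ s, ∑ t ∈ T, b i t ≤ c i) :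
    (∑ t ∈ T, x t) ^ #s ≤ a * ∏ i ∈ s, c i := by
  set w : ℝ := (#s : ℝ)⁻¹
  have hk : (0 : ℝ) < #s := by exact_mod_cast hs.card_pos
  have hB : ∀ i ∈ s, 0 ≤ ∑ t ∈ T, b i t := fun i hi => sum_nonneg (hb i hi)
  have root_le_iff {y z : ℝ} (hy : 0 ≤ y) (hz : 0 ≤ z) : y ≤ z ^ w ↔ y ^ #s ≤ z := by
    rw [Real.le_rpow_inv_iff_of_pos hy hz hk, Real.rpow_natCast]
  have hxroot : ∀ t ∈ T, x t ≤ a ^ w * ∏ i ∈ s, b i t ^ w := fun t ht => by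
    rw [Real.finsetProd_rpow _ _ fun i hi => hb i hi t ht, ← Real.mul_rpow ha
      (prod_nonneg fun i hi => hb i hi t ht), root_le_iff (hx t ht)
      (mul_nonneg ha (prod_nonneg fun i hi => hb i hi t ht))]
    exact hxb t ht
  rw [← root_le_iff (sum_nonneg hx) (mul_nonneg ha (prod_nonneg fun i hi => (hB i hi).trans
    (hbc i hi))), Real.mul_rpow ha (prod_nonneg fun i hi => (hB i hi).trans (hbc i hi)),
    ← Real.finsetProd_rpow _ _ fun i hi => (hB i hi).trans (hbc i hi)]
  calc ∑ t ∈ T, x t ≤ ∑ t ∈ T, a ^ w * ∏ i ∈ s, b i t ^ w := sum_le_sum hxroot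
    _ = a ^ w * ∑ t ∈ T, ∏ i ∈ s, b i t ^ w := (mul_sum ..).symm
    _ ≤ a ^ w * ∏ i ∈ s, (∑ t ∈ T, b i t) ^ w := by
        gcongr
        exact sum_prod_rpow_inv_card_le_prod_sum_rpow T hs b hb
    _ ≤ a ^ w * ∏ i ∈ s, c i ^ w := by
        gcongr a ^ w * ?_
        exact prod_le_prod (fun i hi => Real.rpow_nonneg (hB i hi) w)
          fun i hi => Real.rpow_le_rpow (hB i hi) (hbc i hi) (by positivity)

section Translates

variable {G : Type*} [AddCommGroup G] [DecidableEq G]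

theorem card_filter_sub_mem (P : Finset G) (v : G) :
    #(P.filter (· - v ∈ P)) = #(P.filter (· + v ∈ P)) := by
  rw [← card_image_of_injective (P.filter (· + v ∈ P)) (add_left_injective v)]
  congr 1
  ext p
  simp only [mem_filter, mem_image]
  constructor
  · rintro ⟨hp, hpv⟩
    exact ⟨p - v, ⟨hpv, by simpa using hp⟩, by abel⟩
  · rintro ⟨q, ⟨hq, hqv⟩, rfl⟩
    exact ⟨hqv, by simpa using hq⟩

theorem card_offDiag_filter_sub_mem_s8 (P D : Finset G) (hD : (0 : G) ∉ D) :
    #(P.offDiag.filter (fun x => x.1 - x.2 ∈ D)) = ∑ v ∈ D, #(P.filter (· + v ∈ P)) := by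
  rw [card_eq_sum_card_fiberwise (s := P.offDiag.filter (fun x => x.1 - x.2 ∈ D))
    (f := fun x => x.1 - x.2) (t := D) fun x hx => (mem_filter.mp hx).2]
  refine sum_congr rfl fun v hv => ?_
  refine card_nbij' (fun x => x.2) (fun p => (p + v, p)) ?_ ?_ ?_ ?_
  · rintro ⟨p, q⟩ hx
    simp only [coe_filter, mem_filter, mem_offDiag, Set.mem_ofPred_eq] at hx ⊢
    obtain ⟨⟨⟨hp, hq, -⟩, -⟩, rfl⟩ := hx
    simpa using ⟨hq, hp⟩
  · intro p hp
    simp only [coe_filter, mem_filter, mem_offDiag, Set.mem_ofPred_eq, add_sub_cancel_left] at hp ⊢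
    refine ⟨⟨⟨hp.2, hp.1, fun h => hD ?_⟩, hv⟩, trivial⟩
    rwa [← add_eq_left.mp h]
  · rintro ⟨p, q⟩ hx
    simp only [coe_filter, mem_filter, Set.mem_ofPred_eq] at hx
    simp [← hx.2]
  · intro p _
    rfl

end Translates

theorem sum_card_image_filter_le {α β γ : Type*} [DecidableEq β] [DecidableEq γ] (P : Finset α)
    (T : Finset γ) (f : α → β) (g : α → γ) (hfg : ∀ p ∈ P, ∀ q ∈ P, f p = f q → g p = g q) :
    ∑ t ∈ T, #((P.filter (g · = t)).image f) ≤ #(P.image f) := by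
  rw [← card_biUnion (s := T) (t := fun t => (P.filter (g · = t)).image f)]
  · exact card_le_card (biUnion_subset.mpr fun t _ => image_subset_image (filter_subset _ _))
  · intro t _ t' _ htt'
    simp only [Function.onFun, disjoint_left, mem_image, mem_filter]
    rintro _ ⟨p, ⟨hp, rfl⟩, rfl⟩ ⟨q, ⟨hq, rfl⟩, hqp⟩
    exact htt' (hfg p hp q hq hqp.symm)

variable {d : ℕ}

theorem sum_sq_eq_one_iff (v : Fin d → ℤ) :
    ∑ i, v i ^ 2 = 1 ↔ ∃ i, Pi.single i 1 = v ∨ -Pi.single i 1 = v := by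
  constructor
  · intro h
    obtain ⟨i, hi⟩ : ∃ i, v i ≠ 0 := by
      by_contra! h0
      simp [h0] at h
    have hsplit := add_sum_erase univ (fun j => v j ^ 2) (mem_univ i)
    have hrest : ∑ j ∈ univ.erase i, v j ^ 2 = 0 := by
      have := sum_nonneg fun j (_ : j ∈ univ.erase i) => sq_nonneg (v j)
      have : 0 < v i ^ 2 := by positivity
      omega
    have hvi : v i ^ 2 = 1 := by omega
    have hv : v = Pi.single i (v i) := by
      ext j
      rcases eq_or_ne j i with rfl | hj
      · simp
      · have := (sum_eq_zero_iff_of_nonneg fun j _ => sq_nonneg (v j)).mp hrest j (by simpa using hj)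
        simpa [hj] using this
    refine ⟨i, ?_⟩
    rcases sq_eq_one_iff.mp hvi with h1 | h1
    · exact Or.inl (h1 ▸ hv).symm
    · exact Or.inr (by rw [hv, h1, Pi.single_neg])
  · rintro ⟨i, rfl | rfl⟩ <;> simp [Pi.single_apply]

theorem adjPairsZ_eq (P : Finset (Fin d → ℤ)) :
    adjPairsZ P = 2 * ∑ i, #(P.filter (· + Pi.single i 1 ∈ P)) := by
  set U : Finset (Fin d → ℤ) := univ.image fun i => Pi.single i 1
  have hU : Set.InjOn (fun i : Fin d => Pi.single i (1 : ℤ)) (univ : Finset (Fin d)) := by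
    intro i _ j _ h
    by_contra hij
    simpa [hij] using congrFun h i
  have hdisj : Disjoint U (U.image Neg.neg) := by
    simp only [U, disjoint_left, mem_image, mem_univ, true_and]
    rintro _ ⟨i, rfl⟩ ⟨_, ⟨j, rfl⟩, h⟩
    have := congrFun h i
    by_cases hij : i = j <;> simp_all
  have h0 : (0 : Fin d → ℤ) ∉ U ∪ U.image Neg.neg := by
    simp [U]
  calc adjPairsZ P = #(P.offDiag.filter fun x => x.1 - x.2 ∈ U ∪ U.image Neg.neg) := by
        unfold adjPairsZ
        congr 1
        refine filter_congr fun x _ => ?_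
        simp only [← Pi.sub_apply x.1 x.2, sum_sq_eq_one_iff, mem_union, mem_image, mem_univ,
          true_and, exists_exists_eq_and, exists_or, U]
    _ = ∑ v ∈ U, #(P.filter (· + v ∈ P)) + ∑ v ∈ U, #(P.filter (· - v ∈ P)) := by
        rw [card_offDiag_filter_sub_mem_s8 _ _ h0, sum_union hdisj, sum_image neg_injective.injOn]
        simp only [sub_eq_add_neg]
    _ = 2 * ∑ i, #(P.filter (· + Pi.single i 1 ∈ P)) := by
        rw [two_mul, sum_image hU]
        simp only [card_filter_sub_mem, sum_image hU, U]

def hyperplaneProj (i : Fin d) (p : Fin d → ℤ) : Fin d → ℤ := Function.update p i 0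

theorem hyperplaneProj_add_single (i : Fin d) (p : Fin d → ℤ) (a : ℤ) :
    hyperplaneProj i (p + Pi.single i a) = hyperplaneProj i p := by
  ext j
  rcases eq_or_ne j i with rfl | hj <;> simp [hyperplaneProj, *]

theorem hyperplaneProj_injOn_coord_eq (i : Fin d) (t : ℤ) :
    Set.InjOn (hyperplaneProj i) {p | p i = t} := by
  intro p hp q hq h
  rw [← Function.update_eq_self i p, ← Function.update_eq_self i q, Set.mem_ofPred_eq.mp hp,
    Set.mem_ofPred_eq.mp hq]
  simpa [hyperplaneProj] using congrArg (Function.update · i t) h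

theorem card_filter_add_single_mem_add_card_image_le (P : Finset (Fin d → ℤ)) (i : Fin d) :
    #(P.filter (· + Pi.single i 1 ∈ P)) + #(P.image (hyperplaneProj i)) ≤ #P := by
  set T := P.filter (· + Pi.single i 1 ∈ P)
  -- the topmost point of each line of `P` in direction `i` has no successor in `P`
  have hsub : P.image (hyperplaneProj i) ⊆ (P \ T).image (hyperplaneProj i) := by
    intro y hy
    obtain ⟨q, hq, hqmax⟩ := exists_max_image (P.filter (hyperplaneProj i · = y)) (· i)
      (by simpa [Finset.Nonempty] using hy)
    rw [mem_filter] at hq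
    refine mem_image.mpr ⟨q, mem_sdiff.mpr ⟨hq.1, fun hqT => ?_⟩, hq.2⟩
    have := hqmax (q + Pi.single i 1)
      (mem_filter.mpr ⟨(mem_filter.mp hqT).2, by rw [hyperplaneProj_add_single, hq.2]⟩)
    simp at this
  calc #T + #(P.image (hyperplaneProj i)) ≤ #T + #(P \ T) :=
        Nat.add_le_add_left ((card_le_card hsub).trans card_image_le) _
    _ = #P := by rw [add_comm, card_sdiff_add_card_eq_card (filter_subset _ _)]

theorem loomis_whitney (s : Finset (Fin d)) (P : Finset (Fin d → ℤ)) (hP : P.Nonempty)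
    (hflat : ∀ p ∈ P, ∀ q ∈ P, ∀ j ∉ s, p j = q j) :
    #P ^ (#s - 1) ≤ ∏ i ∈ s, #(P.image (hyperplaneProj i)) := by
  induction s using Finset.induction_on generalizing P with
  | empty => simp
  | @insert j s hj ih =>
    rcases s.eq_empty_or_nonempty with rfl | hs'
    · simpa using (hP.image (hyperplaneProj j)).card_pos
    rw [card_insert_of_notMem hj, Nat.add_sub_cancel, prod_insert hj]
    set T := P.image fun p => p j
    set fiber := fun t : ℤ => P.filter (· j = t)
    have hfiber : ∀ t ∈ T, #(fiber t) ^ #s ≤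
        #(P.image (hyperplaneProj j)) * ∏ i ∈ s, #((fiber t).image (hyperplaneProj i)) := by
      intro t ht
      obtain ⟨p, hp, rfl⟩ := mem_image.mp ht
      have hne : (fiber (p j)).Nonempty := ⟨p, mem_filter.mpr ⟨hp, rfl⟩⟩
      have hflat' : ∀ q ∈ fiber (p j), ∀ r ∈ fiber (p j), ∀ l ∉ s, q l = r l := by
        intro q hq r hr l hl
        simp only [fiber, mem_filter] at hq hr
        rcases eq_or_ne l j with rfl | hlj
        · rw [hq.2, hr.2]
        · exact hflat q hq.1 r hr.1 l (by simp [hlj, hl])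
      have hproj : #(fiber (p j)) ≤ #(P.image (hyperplaneProj j)) :=
        card_le_card_of_injOn _ (fun q hq => mem_image_of_mem _ (mem_filter.mp hq).1)
          ((hyperplaneProj_injOn_coord_eq j (p j)).mono fun q hq => (mem_filter.mp hq).2)
      rw [← Nat.sub_add_cancel hs'.card_pos, pow_succ']
      exact Nat.mul_le_mul hproj (ih _ hne hflat')
    have hsum : ∀ i ∈ s, ∑ t ∈ T,
        #((fiber t).image (hyperplaneProj i)) ≤ #(P.image (hyperplaneProj i)) := by
      intro i hi
      refine sum_card_image_filter_le _ _ _ _ fun p _ q _ hpq => ?_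
      have := congrFun hpq j
      simpa [hyperplaneProj, Function.update_of_ne (ne_of_mem_of_not_mem hi hj).symm] using this
    rw [card_eq_sum_card_fiberwise (s := P) (f := fun p => p j) (t := T)
      fun p hp => mem_image_of_mem _ hp]
    exact_mod_cast sum_pow_card_le_of_pow_card_le T hs'
      (fun i => (#(P.image (hyperplaneProj i)) : ℝ)) (fun _ _ => Nat.cast_nonneg _)
      (fun _ _ _ _ => Nat.cast_nonneg _) (Nat.cast_nonneg _)
      (fun t ht => by exact_mod_cast hfiber t ht) (fun i hi => by exact_mod_cast hsum i hi)

theorem card_mul_card_rpow_le_sum_card_image_hyperplaneProj (P : Finset (Fin d → ℤ))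
    (hP : P.Nonempty) :
    d * (#P : ℝ) ^ (((d : ℝ) - 1) / d) ≤ ∑ i, (#(P.image (hyperplaneProj i)) : ℝ) := by
  rcases Nat.eq_zero_or_pos d with rfl | hd
  · simp
  have hLW : (#P : ℝ) ^ (d - 1) ≤ ∏ i, (#(P.image (hyperplaneProj i)) : ℝ) := by
    have := loomis_whitney univ P hP (by simp)
    rw [card_univ, Fintype.card_fin] at this
    exact_mod_cast this
  have hroot : (#P : ℝ) ^ (((d : ℝ) - 1) / d) = ((#P : ℝ) ^ (d - 1)) ^ (d : ℝ)⁻¹ := by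
    rw [← Real.rpow_natCast, ← Real.rpow_mul (Nat.cast_nonneg _), Nat.cast_sub hd, Nat.cast_one,
      div_eq_mul_inv]
  calc d * (#P : ℝ) ^ (((d : ℝ) - 1) / d)
      ≤ d * (∏ i, (#(P.image (hyperplaneProj i)) : ℝ)) ^ (d : ℝ)⁻¹ := by
        rw [hroot]
        gcongr
    _ ≤ ∑ i, (#(P.image (hyperplaneProj i)) : ℝ) := by
        simpa using card_mul_prod_rpow_inv_card_le_sum (univ_nonempty_iff.mpr ⟨⟨0, hd⟩⟩)
          (fun i => (#(P.image (hyperplaneProj i)) : ℝ)) fun _ _ => Nat.cast_nonneg _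

theorem lattice_contact_upper_bound_general (n d : ℕ) (hn : 1 < n)
    (P : Finset (Fin d → ℤ)) (hcard : P.card = n) :
    (adjPairsZ P : ℤ) ≤ 2 * ⌊(d * n - d * (n : ℝ) ^ (((d : ℝ) - 1) / d) : ℝ)⌋ := by
  subst hcard
  set K := ∑ i, #(P.filter (· + Pi.single i 1 ∈ P))
  have hsteps : K + ∑ i, #(P.image (hyperplaneProj i)) ≤ d * #P := by
    rw [← sum_add_distrib]
    simpa using sum_le_sum fun i (_ : i ∈ univ) =>
      card_filter_add_single_mem_add_card_image_le P i
  have hproj := card_mul_card_rpow_le_sum_card_image_hyperplaneProj P (card_pos.mp (by omega))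
  rw [adjPairsZ_eq, Nat.cast_mul, Nat.cast_two]
  gcongr
  rw [Int.le_floor, Int.cast_natCast]
  have : (K : ℝ) + ∑ i, (#(P.image (hyperplaneProj i)) : ℝ) ≤ d * #P := by exact_mod_cast hsteps
  linarith

/-- For all `n > 1` and `d ≥ 2`, the number of pairs of points at distance exactly `1`
among `n` points of `ℤ^d` is at most `⌊dn - d·n^((d-1)/d)⌋`. -/
theorem lattice_contact_upper_bound (n d : ℕ) (hn : 1 < n) (hd : 2 ≤ d)
    (P : Finset (Fin d → ℤ)) (hcard : P.card = n) :
    (adjPairsZ P : ℤ) ≤ 2 * ⌊(d * n - d * (n : ℝ) ^ (((d : ℝ) - 1) / d) : ℝ)⌋ :=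
  lattice_contact_upper_bound_general n d hn P hcard
end
end
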